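/- arXiv:0908.0582 — 11 statements merged into one kernel-verified Lean document; each statement's English description precedes it below -/
import Mathlib

section
/- Let h ≥ 1 and let P = ∑_{g ∈ ℤ^h} c_g g be a finitely supported element of the group ring ℂ[ℤ^h] with c_g = conj(c_{−g}) for all g, and let l₁(P) = ∑_g |c_g|. Then for every λ ∈ ℂ with |λ| · l₁(P) < 1, the real part of −∑_{n=1}^{∞} a_n λ^n / n, where a_n = [P^n]_0, equals the classical Mahler measure of 1 − λP, i.e. equals (1/(2π)^h) ∫_{[0,2π]^h} log |1 − λ · ∑_g c_g e^{i(g_1θ_1 + ⋯ + g_hθ_h)}| dθ_1 ⋯ dθ_h. -/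
/-!
Evaluation at `θ ∈ [0, 2π]^h`, `g ↦ exp (i ⟨g, θ⟩)`, is an algebra map `ℂ[ℤ^h] → ℂ`, so `P^n`
evaluates to `P(θ)^n`, and orthogonality of the characters gives
`∫ P(θ)^n dθ = (2π)^h [P^n]_0`. Since `|λ P(θ)| ≤ |λ| l₁(P) < 1` uniformly, the Taylor series
`-log (1 - λ P(θ)) = ∑ (λ P(θ))^n / n` may be integrated term by term, and taking real parts
turns `log` into `log |·|`.
-/

open MeasureTheory Real

section LogSeries

variable {α : Type*} [MeasurableSpace α] {μ : Measure α} [IsFiniteMeasure μ] {f : α → ℂ} {r : ℝ}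

theorem integrable_log_one_sub (hf : AEStronglyMeasurable f μ) (hr : r < 1)
    (hfr : ∀ᵐ x ∂μ, ‖f x‖ ≤ r) : Integrable (fun x => Complex.log (1 - f x)) μ := by
  refine .of_bound ?_ (r ^ 2 * (1 - r)⁻¹ / 2 + r) ?_
  · exact (Complex.measurable_log.comp_aemeasurable
      (aemeasurable_const.sub hf.aemeasurable)).aestronglyMeasurable
  filter_upwards [hfr] with x hx
  have hx1 : ‖-f x‖ < 1 := by rw [norm_neg]; linarith
  have hr1 : 0 < 1 - r := by linarith
  calc ‖Complex.log (1 - f x)‖ ≤ ‖-f x‖ ^ 2 * (1 - ‖-f x‖)⁻¹ / 2 + ‖-f x‖ := by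
        rw [sub_eq_add_neg]; exact Complex.norm_log_one_add_le hx1
    _ ≤ r ^ 2 * (1 - r)⁻¹ / 2 + r := by
        rw [norm_neg] at *; gcongr

theorem hasSum_integral_taylorSeries_neg_log (hf : AEStronglyMeasurable f μ) (hr : r < 1)
    (hfr : ∀ᵐ x ∂μ, ‖f x‖ ≤ r) :
    HasSum (fun n : ℕ => ∫ x, f x ^ (n + 1) / (n + 1) ∂μ) (∫ x, -Complex.log (1 - f x) ∂μ) := by
  obtain ⟨s, hs0, hs1, hfs⟩ : ∃ s, 0 ≤ s ∧ s < 1 ∧ ∀ᵐ x ∂μ, ‖f x‖ ≤ s :=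
    ⟨max r 0, le_max_right _ _, max_lt hr one_pos,
      hfr.mono fun x hx => hx.trans (le_max_left _ _)⟩
  have hterm_le : ∀ n : ℕ, ∀ᵐ x ∂μ, ‖f x ^ (n + 1) / (n + 1)‖ ≤ s ^ (n + 1) := fun n => by
    filter_upwards [hfs] with x hx
    rw [norm_div, norm_pow]
    refine (div_le_self (by positivity) ?_).trans (pow_le_pow_left₀ (norm_nonneg _) hx _)
    rw [← Nat.cast_add_one, Complex.norm_natCast]
    exact_mod_cast Nat.le_add_left 1 n
  have hterm_int : ∀ n : ℕ, Integrable (fun x => f x ^ (n + 1) / (n + 1)) μ := fun n =>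
    .of_bound (by fun_prop) _ (hterm_le n)
  have hsummable : Summable fun n : ℕ => ∫ x, ‖f x ^ (n + 1) / (n + 1)‖ ∂μ := by
    refine .of_nonneg_of_le (fun n => integral_nonneg fun _ => norm_nonneg _) (fun n => ?_)
      ((summable_geometric_of_lt_one hs0 hs1).mul_left (μ.real Set.univ * s))
    calc ∫ x, ‖f x ^ (n + 1) / (n + 1)‖ ∂μ ≤ ∫ _, s ^ (n + 1) ∂μ :=
          integral_mono_ae (hterm_int n).norm (integrable_const _) (hterm_le n)
      _ = μ.real Set.univ * s * s ^ n := by rw [integral_const, smul_eq_mul, pow_succ]; ring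
  have htsum : ∫ x, (∑' n : ℕ, f x ^ (n + 1) / (n + 1)) ∂μ = ∫ x, -Complex.log (1 - f x) ∂μ := by
    refine integral_congr_ae ?_
    filter_upwards [hfs] with x hx
    exact (Complex.hasSum_taylorSeries_neg_log' (hx.trans_lt hs1)).tsum_eq
  exact htsum ▸ hasSum_integral_of_summable_integral_norm hterm_int hsummable

end LogSeries

theorem integral_Icc_exp_I_mul_intCast_mul (k : ℤ) :
    ∫ t in Set.Icc (0 : ℝ) (2 * π), Complex.exp (Complex.I * k * t) =
      if k = 0 then ((2 * π : ℝ) : ℂ) else 0 := by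
  rw [integral_Icc_eq_integral_Ioc, ← intervalIntegral.integral_of_le (by positivity)]
  split_ifs with hk
  · simp [hk]
  have hk' : Complex.I * k ≠ 0 := by simp [hk, Complex.I_ne_zero]
  have hperiod : Complex.I * k * ((2 * π : ℝ) : ℂ) = k * (2 * π * Complex.I) := by push_cast; ring
  rw [integral_exp_mul_complex hk', hperiod, Complex.exp_int_mul_two_pi_mul_I]
  simp

section Torus

variable {ι : Type*} [Fintype ι]

theorem integral_pi_Icc_exp_I_mul_sum (g : ι → ℤ) :
    ∫ θ in Set.univ.pi (fun _ : ι => Set.Icc (0 : ℝ) (2 * π)),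
        Complex.exp (Complex.I * ∑ i, (g i : ℂ) * (θ i : ℂ)) =
      if g = 0 then (((2 * π) ^ Fintype.card ι : ℝ) : ℂ) else 0 := by
  have hprod : ∀ θ : ι → ℝ, Complex.exp (Complex.I * ∑ i, (g i : ℂ) * (θ i : ℂ)) =
      ∏ i, Complex.exp (Complex.I * g i * θ i) := fun θ => by
    rw [Finset.mul_sum, Complex.exp_sum]
    simp only [mul_assoc]
  simp_rw [hprod]
  rw [volume_pi, Measure.restrict_pi_pi,
    integral_fintype_prod_eq_prod fun i (t : ℝ) => Complex.exp (Complex.I * g i * t)]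
  simp_rw [integral_Icc_exp_I_mul_intCast_mul, Finset.prod_ite_zero, Finset.mem_univ,
    true_imp_iff, Finset.prod_const, Finset.card_univ, funext_iff, Pi.zero_apply]
  push_cast
  rfl

noncomputable def torusChar (θ : ι → ℝ) : Multiplicative (ι → ℤ) →* ℂ where
  toFun g := Complex.exp (Complex.I * ∑ i, (g.toAdd i : ℂ) * (θ i : ℂ))
  map_one' := by simp
  map_mul' x y := by
    simp only [toAdd_mul, Pi.add_apply, Int.cast_add, add_mul, Finset.sum_add_distrib, mul_add,
      Complex.exp_add]

noncomputable def torusEval (θ : ι → ℝ) : AddMonoidAlgebra ℂ (ι → ℤ) →ₐ[ℂ] ℂ :=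
  AddMonoidAlgebra.lift ℂ ℂ (ι → ℤ) (torusChar θ)

theorem torusEval_apply (θ : ι → ℝ) (Q : AddMonoidAlgebra ℂ (ι → ℤ)) :
    torusEval θ Q = ∑ g ∈ Q.coeff.support,
      Q.coeff g * Complex.exp (Complex.I * ∑ i, (g i : ℂ) * (θ i : ℂ)) := by
  simp [torusEval, AddMonoidAlgebra.lift_apply, Finsupp.sum, torusChar]

theorem norm_exp_I_mul_sum (g : ι → ℤ) (θ : ι → ℝ) :
    ‖Complex.exp (Complex.I * ∑ i, (g i : ℂ) * (θ i : ℂ))‖ = 1 := by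
  rw [Complex.norm_exp]
  simp [Complex.mul_re]

theorem norm_torusEval_le (θ : ι → ℝ) (Q : AddMonoidAlgebra ℂ (ι → ℤ)) :
    ‖torusEval θ Q‖ ≤ ∑ g ∈ Q.coeff.support, ‖Q.coeff g‖ := by
  rw [torusEval_apply]
  refine (norm_sum_le _ _).trans_eq (Finset.sum_congr rfl fun g _ => ?_)
  rw [norm_mul, norm_exp_I_mul_sum, mul_one]

theorem continuous_torusEval (Q : AddMonoidAlgebra ℂ (ι → ℤ)) :
    Continuous fun θ : ι → ℝ => torusEval θ Q := by
  simp_rw [torusEval_apply]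
  fun_prop

theorem integral_torusEval (Q : AddMonoidAlgebra ℂ (ι → ℤ)) :
    ∫ θ in Set.univ.pi (fun _ : ι => Set.Icc (0 : ℝ) (2 * π)), torusEval θ Q =
      (((2 * π) ^ Fintype.card ι : ℝ) : ℂ) * Q.coeff 0 := by
  have hint : ∀ g : ι → ℤ, Integrable
      (fun θ : ι → ℝ => Complex.exp (Complex.I * ∑ i, (g i : ℂ) * (θ i : ℂ)))
      (volume.restrict (Set.univ.pi fun _ : ι => Set.Icc (0 : ℝ) (2 * π))) := fun g =>
    (by fun_prop : Continuous _).continuousOn.integrableOn_compact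
      (isCompact_univ_pi fun _ => isCompact_Icc)
  simp_rw [torusEval_apply]
  rw [integral_finsetSum _ fun g _ => (hint g).const_mul _]
  simp_rw [integral_const_mul, integral_pi_Icc_exp_I_mul_sum, mul_ite, mul_zero,
    Finset.sum_ite_eq', Finsupp.mem_support_iff]
  split_ifs with h0
  · ring
  · simp [not_not.mp h0]

end Torus

theorem mahler_measure_eq_classical_general (h : ℕ)
    (P : AddMonoidAlgebra ℂ (Fin h → ℤ))
    (a : ℕ → ℂ) (ha : ∀ n, a n = (P ^ n).coeff 0)
    (lam : ℂ) (hl : ‖lam‖ * ∑ g ∈ P.coeff.support, ‖P.coeff g‖ < 1) :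
    (-∑' n : ℕ, a (n + 1) * lam ^ (n + 1) / (n + 1)).re =
      (1 / (2 * π) ^ h) *
        ∫ θ in Set.univ.pi (fun _ : Fin h => Set.Icc (0 : ℝ) (2 * π)),
          Real.log (‖
            (1 - lam * ∑ g ∈ P.coeff.support,
              P.coeff g * Complex.exp (Complex.I * ∑ i, (g i : ℂ) * (θ i : ℂ)))‖) := by
  set μ := volume.restrict (Set.univ.pi fun _ : Fin h => Set.Icc (0 : ℝ) (2 * π))
  have : IsFiniteMeasure μ :=
    isFiniteMeasure_restrict.2 (isCompact_univ_pi fun _ => isCompact_Icc).measure_lt_top.ne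
  set f : (Fin h → ℝ) → ℂ := fun θ => lam * torusEval θ P
  have hf : AEStronglyMeasurable f μ :=
    (continuous_const.mul (continuous_torusEval P)).aestronglyMeasurable
  have hfr : ∀ᵐ θ ∂μ, ‖f θ‖ ≤ ‖lam‖ * ∑ g ∈ P.coeff.support, ‖P.coeff g‖ :=
    .of_forall fun θ => (norm_mul _ _).trans_le <| by gcongr; exact norm_torusEval_le θ P
  set c : ℂ := (((2 * π) ^ h : ℝ) : ℂ)
  have hterm : ∀ n : ℕ,
      ∫ θ, f θ ^ (n + 1) / (n + 1) ∂μ = c * (a (n + 1) * lam ^ (n + 1) / (n + 1)) := fun n => by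
    have hpow : ∀ θ, f θ ^ (n + 1) / (n + 1) =
        lam ^ (n + 1) / (n + 1) * torusEval θ (P ^ (n + 1)) := fun θ => by rw [map_pow]; ring
    simp_rw [hpow, integral_const_mul, μ, integral_torusEval, Fintype.card_fin, ha]
    ring
  have hseries : HasSum (fun n : ℕ => a (n + 1) * lam ^ (n + 1) / (n + 1))
      (c⁻¹ * ∫ θ, -Complex.log (1 - f θ) ∂μ) := by
    have hc : c ≠ 0 := by simp [c, pi_ne_zero]
    simpa only [hterm, ← mul_assoc, inv_mul_cancel₀ hc, one_mul] using
      (hasSum_integral_taylorSeries_neg_log hf hl hfr).mul_left c⁻¹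
  have hre := integral_re (integrable_log_one_sub hf hl hfr)
  simp only [RCLike.re_to_complex, Complex.log_re] at hre
  simp_rw [← torusEval_apply]
  rw [hseries.tsum_eq, integral_neg, mul_neg, neg_neg, ← Complex.ofReal_inv,
    Complex.re_ofReal_mul, ← hre, one_div]

/-- For `Γ = ℤ^h` and a self-adjoint `P ∈ ℂ[ℤ^h]`, the real part of the
Lück–Fuglede–Kadison determinant series `-∑ a_n λ^n / n` equals the classical
Mahler measure of `1 - λP`. -/
theorem mahler_measure_eq_classical (h : ℕ) (hh : 1 ≤ h)
    (P : AddMonoidAlgebra ℂ (Fin h → ℤ))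
    (hP : ∀ g : Fin h → ℤ, P.coeff g = starRingEnd ℂ (P.coeff (-g)))
    (a : ℕ → ℂ) (ha : ∀ n, a n = (P ^ n).coeff 0)
    (lam : ℂ) (hl : ‖lam‖ * ∑ g ∈ P.coeff.support, ‖P.coeff g‖ < 1) :
    (-∑' n : ℕ, a (n + 1) * lam ^ (n + 1) / (n + 1)).re =
      (1 / (2 * π) ^ h) *
        ∫ θ in Set.univ.pi (fun _ : Fin h => Set.Icc (0 : ℝ) (2 * π)),
          Real.log (‖
            (1 - lam * ∑ g ∈ P.coeff.support,
              P.coeff g * Complex.exp (Complex.I * ∑ i, (g i : ℂ) * (θ i : ℂ)))‖) :=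
  mahler_measure_eq_classical_general h P a ha lam hl
end

section
/- Let Γ be a finite group, let P ∈ ℂ[Γ], and let M_P : ℂ[Γ] → ℂ[Γ] be the ℂ-linear map given by left multiplication by P. Let l₁(P) be the sum of the absolute values of the coefficients of P, and let λ ∈ ℂ with |λ| · l₁(P) < 1. Then, with a_n = [P^n]_0, one has exp( −|Γ| · ∑_{n=1}^{∞} a_n λ^n / n ) = det(1 − λ M_P). -/
/-!
On the generalized eigenspace of `M_P` for an eigenvalue `μ`, of dimension `d_μ`, the operator
acts as `μ` plus a nilpotent, so `det(1 - λ M_P) = ∏ (1 - λμ)^{d_μ}` and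
`tr(M_P^n) = ∑ d_μ μ^n`. Since `tr(M_Q) = |Γ| [Q]_0` for every `Q`, this power sum is `|Γ| a_n`.
Evaluating `P v = μ v` at a largest coefficient of the eigenvector `v` gives `|μ| ≤ l₁(P)`, so
each `∑ (λμ)^n / n` converges to `-log(1 - λμ)`, and exponentiating turns the sum over `μ`
into the determinant.
-/

open LinearMap Module Module.End Set Finset

theorem Matrix.det_blockDiagonal' {o R : Type*} [Fintype o] [DecidableEq o] {κ : o → Type*}
    [∀ i, Fintype (κ i)] [∀ i, DecidableEq (κ i)] [CommRing R]
    (d : ∀ i, Matrix (κ i) (κ i) R) :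
    (blockDiagonal' d).det = ∏ i, (d i).det := by
  -- a block-diagonal matrix is block-triangular for any order on the blocks
  let : LinearOrder o := LinearOrder.lift' _ (Fintype.equivFin o).injective
  have hblock (i : o) : (blockDiagonal' d).toSquareBlock Sigma.fst i =
      (d i).submatrix (Equiv.sigmaSubtype i) (Equiv.sigmaSubtype i) := by
    ext ⟨⟨j, x⟩, hj⟩ ⟨⟨k, y⟩, hk⟩
    obtain rfl : j = i := hj
    obtain rfl : k = j := hk
    simp [toSquareBlock_def, blockDiagonal'_apply_eq]
  rw [(blockTriangular_blockDiagonal' d).det]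
  simp_rw [hblock, det_submatrix_equiv_self]
  refine prod_subset (subset_univ _) fun i _ hi => ?_
  have : IsEmpty (κ i) := ⟨fun x => hi (mem_image_of_mem Sigma.fst (mem_univ ⟨i, x⟩))⟩
  exact det_isEmpty

namespace LinearMap

variable {R M : Type*} [CommRing R] [AddCommGroup M] [Module R M]

section IsInternal

variable {ι : Type*} {N : ι → Submodule R M} [∀ i, Module.Finite R (N i)]
  [∀ i, Module.Free R (N i)] [DecidableEq ι]

theorem det_eq_prod_det_restrict [Fintype ι] (h : DirectSum.IsInternal N) {f : End R M}
    (hf : ∀ i, MapsTo f (N i) (N i)) :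
    LinearMap.det f = ∏ i, LinearMap.det (f.restrict (hf i)) := by
  let b (i : ι) : Basis _ R (N i) := Module.Free.chooseBasis R (N i)
  simp_rw [← det_toMatrix (h.collectedBasis b),
    toMatrix_directSum_collectedBasis_eq_blockDiagonal' h h b b hf, Matrix.det_blockDiagonal',
    det_toMatrix]

theorem det_eq_prod_det_restrict' (h : DirectSum.IsInternal N) (hN : {i | N i ≠ ⊥}.Finite)
    {f : End R M} (hf : ∀ i, MapsTo f (N i) (N i)) :
    LinearMap.det f = ∏ i ∈ hN.toFinset, LinearMap.det (f.restrict (hf i)) := by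
  let _ : Fintype {i // N i ≠ ⊥} := hN.fintype
  let _ : Fintype {i | N i ≠ ⊥} := hN.fintype
  rw [← prod_coe_sort, det_eq_prod_det_restrict (DirectSum.isInternal_ne_bot_iff.mpr h) (hf ·)]
  exact Fintype.prod_equiv hN.subtypeEquivToFinset _ _ fun i ↦ rfl

end IsInternal

section Nilpotent

variable [Module.Free R M] [Module.Finite R M] {g : End R M} {μ : R}

theorem det_one_sub_smul_of_isNilpotent_sub [IsDomain R]
    (hg : IsNilpotent (g - algebraMap R _ μ)) (c : R) :
    LinearMap.det (1 - c • g) = (1 - c * μ) ^ finrank R M := by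
  have hshift : 1 - c • g = algebraMap R _ (1 - c * μ) - c • (g - algebraMap R _ μ) := by
    simp only [map_sub, map_one, map_mul, Algebra.smul_def]
    noncomm_ring
  rw [hshift, ← eval_charpoly, (hg.smul c).charpoly_eq_X_pow_finrank, Polynomial.eval_pow,
    Polynomial.eval_X]

theorem trace_pow_of_isNilpotent_sub [IsReduced R] (hg : IsNilpotent (g - algebraMap R _ μ))
    (n : ℕ) : trace R M (g ^ n) = μ ^ n * finrank R M := by
  induction n with
  | zero => simp
  | succ n ih =>
    rw [pow_succ, mul_eq_comp,
      trace_comp_eq_mul_of_commute_of_isNilpotent μ (Commute.pow_left rfl n) hg, ih, pow_succ]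
    ring

end Nilpotent

end LinearMap

namespace Module.End

variable {K V : Type*} [Field K] [AddCommGroup V] [Module K V] [FiniteDimensional K V]
  (f : End K V)

theorem finite_maxGenEigenspace_ne_bot : {μ | f.maxGenEigenspace μ ≠ ⊥}.Finite :=
  WellFoundedGT.finite_ne_bot_of_iSupIndep f.independent_maxGenEigenspace

variable [IsAlgClosed K]

theorem isInternal_maxGenEigenspace [DecidableEq K] :
    DirectSum.IsInternal f.maxGenEigenspace :=
  DirectSum.isInternal_submodule_of_iSupIndep_of_iSup_eq_top
    f.independent_maxGenEigenspace f.iSup_maxGenEigenspace_eq_top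

theorem trace_pow_eq_sum_finrank_mul_pow (n : ℕ) :
    trace K V (f ^ n) = ∑ μ ∈ f.finite_maxGenEigenspace_ne_bot.toFinset,
      (finrank K (f.maxGenEigenspace μ) : K) * μ ^ n := by
  classical
  rw [trace_eq_sum_trace_restrict' f.isInternal_maxGenEigenspace f.finite_maxGenEigenspace_ne_bot
    (f.mapsTo_maxGenEigenspace_of_comm (Commute.pow_right rfl n))]
  refine sum_congr rfl fun μ _ => ?_
  rw [← pow_restrict n (f.mapsTo_maxGenEigenspace_of_comm rfl μ), mul_comm,
    trace_pow_of_isNilpotent_sub (f.isNilpotent_restrict_maxGenEigenspace_sub_algebraMap μ)]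

theorem det_one_sub_smul_eq_prod (c : K) :
    LinearMap.det (1 - c • f) = ∏ μ ∈ f.finite_maxGenEigenspace_ne_bot.toFinset,
      (1 - c * μ) ^ finrank K (f.maxGenEigenspace μ) := by
  classical
  have hmaps := f.mapsTo_maxGenEigenspace_of_comm
    ((Commute.one_right f).sub_right ((Commute.refl f).smul_right c))
  rw [det_eq_prod_det_restrict' f.isInternal_maxGenEigenspace f.finite_maxGenEigenspace_ne_bot
    hmaps]
  refine prod_congr rfl fun μ _ => ?_
  have hres : (1 - c • f).restrict (hmaps μ) =
      1 - c • f.restrict (f.mapsTo_maxGenEigenspace_of_comm rfl μ) := by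
    ext; rfl
  rw [hres, det_one_sub_smul_of_isNilpotent_sub
    (f.isNilpotent_restrict_maxGenEigenspace_sub_algebraMap μ)]

end Module.End

theorem Complex.exp_neg_tsum_trace_pow_eq_det {V : Type*} [AddCommGroup V] [Module ℂ V]
    [FiniteDimensional ℂ V] (f : End ℂ V) {c : ℂ} (hc : ∀ μ, f.HasEigenvalue μ → ‖c * μ‖ < 1) :
    exp (-∑' n : ℕ, trace ℂ V (f ^ (n + 1)) * c ^ (n + 1) / (n + 1)) =
      LinearMap.det (1 - c • f) := by
  set s := f.finite_maxGenEigenspace_ne_bot.toFinset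
  have hs : ∀ μ ∈ s, ‖c * μ‖ < 1 := fun μ hμ =>
    hc μ (HasUnifEigenvalue.lt zero_lt_one ((Set.Finite.mem_toFinset _).mp hμ))
  have hterm (n : ℕ) : trace ℂ V (f ^ (n + 1)) * c ^ (n + 1) / (n + 1) =
      ∑ μ ∈ s, (finrank ℂ (f.maxGenEigenspace μ) : ℂ) * ((c * μ) ^ (n + 1) / (n + 1)) := by
    rw [trace_pow_eq_sum_finrank_mul_pow, sum_mul, sum_div]
    exact sum_congr rfl fun μ _ => by ring
  have hsum : HasSum (fun n : ℕ => trace ℂ V (f ^ (n + 1)) * c ^ (n + 1) / (n + 1))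
      (∑ μ ∈ s, (finrank ℂ (f.maxGenEigenspace μ) : ℂ) * -log (1 - c * μ)) := by
    simp_rw [hterm]
    exact hasSum_sum fun μ hμ =>
      (hasSum_taylorSeries_neg_log' (hs μ hμ)).mul_left (finrank ℂ (f.maxGenEigenspace μ) : ℂ)
  rw [hsum.tsum_eq, det_one_sub_smul_eq_prod, ← sum_neg_distrib, exp_sum]
  refine prod_congr rfl fun μ hμ => ?_
  have hne : 1 - c * μ ≠ 0 := sub_ne_zero.mpr fun h => by simpa [← h] using hs μ hμ
  rw [mul_neg, neg_neg, exp_nat_mul, exp_log hne]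

namespace MonoidAlgebra

variable {Γ : Type*} [Group Γ]

theorem trace_mulLeft {k : Type*} [CommRing k] [Fintype Γ] (Q : MonoidAlgebra k Γ) :
    trace k _ (mulLeft k Q) = Fintype.card Γ * Q.coeff 1 := by
  classical
  rw [trace_eq_matrix_trace k (MonoidAlgebra.basis Γ k), Matrix.trace]
  have hdiag (g : Γ) : (toMatrix (MonoidAlgebra.basis Γ k) (MonoidAlgebra.basis Γ k)
      (mulLeft k Q)).diag g = Q.coeff 1 := by
    rw [Matrix.diag_apply, toMatrix_apply]
    change (Q * single g 1).coeff g = _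
    simp [coeff_mul_single_apply]
  simp only [hdiag, sum_const, card_univ, nsmul_eq_mul]

theorem norm_le_sum_norm_coeff_of_hasEigenvalue {𝕜 : Type*} [NormedField 𝕜] [Finite Γ]
    {P : MonoidAlgebra 𝕜 Γ} {μ : 𝕜} (hμ : HasEigenvalue (mulLeft 𝕜 P) μ) :
    ‖μ‖ ≤ ∑ g ∈ P.coeff.support, ‖P.coeff g‖ := by
  obtain ⟨v, hv⟩ := hμ.exists_hasEigenvector
  obtain ⟨g, hg⟩ := Finite.exists_max fun x => ‖v.coeff x‖
  have hvg : 0 < ‖v.coeff g‖ := by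
    refine norm_pos_iff.mpr fun h0 => hv.2 (coeff_inj.mp ?_)
    ext x
    simpa [h0] using hg x
  have heig : μ * v.coeff g = ∑ h ∈ P.coeff.support, P.coeff h * v.coeff (h⁻¹ * g) := by
    simpa [coeff_mul_apply_left, Finsupp.sum] using
      (congrArg (fun w => w.coeff g) hv.apply_eq_smul).symm
  refine le_of_mul_le_mul_right ?_ hvg
  calc ‖μ‖ * ‖v.coeff g‖
      = ‖∑ h ∈ P.coeff.support, P.coeff h * v.coeff (h⁻¹ * g)‖ := by rw [← norm_mul, heig]
    _ ≤ ∑ h ∈ P.coeff.support, ‖P.coeff h‖ * ‖v.coeff (h⁻¹ * g)‖ :=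
        (norm_sum_le _ _).trans_eq (by simp_rw [norm_mul])
    _ ≤ (∑ h ∈ P.coeff.support, ‖P.coeff h‖) * ‖v.coeff g‖ := by
        rw [sum_mul]
        gcongr with h
        exact hg _

end MonoidAlgebra

theorem exp_mahler_eq_det_general (Γ : Type*) [Group Γ] [Fintype Γ]
    (P : MonoidAlgebra ℂ Γ)
    (a : ℕ → ℂ) (ha : ∀ n, a n = (P ^ n).coeff 1)
    (lam : ℂ) (hl : ‖lam‖ * ∑ g ∈ P.coeff.support, ‖P.coeff g‖ < 1) :
    Complex.exp (-(Fintype.card Γ : ℂ) * ∑' n : ℕ, a (n + 1) * lam ^ (n + 1) / (n + 1)) =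
      LinearMap.det
        ((LinearMap.id : MonoidAlgebra ℂ Γ →ₗ[ℂ] MonoidAlgebra ℂ Γ)
          - lam • LinearMap.mulLeft ℂ P) := by
  have htrace (n : ℕ) : trace ℂ _ (mulLeft ℂ P ^ n) = Fintype.card Γ * a n := by
    rw [pow_mulLeft, MonoidAlgebra.trace_mulLeft, ha]
  have hsmall (μ : ℂ) (hμ : HasEigenvalue (mulLeft ℂ P) μ) : ‖lam * μ‖ < 1 :=
    calc ‖lam * μ‖ = ‖lam‖ * ‖μ‖ := norm_mul lam μ
      _ ≤ ‖lam‖ * ∑ g ∈ P.coeff.support, ‖P.coeff g‖ := by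
        gcongr; exact MonoidAlgebra.norm_le_sum_norm_coeff_of_hasEigenvalue hμ
      _ < 1 := hl
  rw [← one_eq_id, ← Complex.exp_neg_tsum_trace_pow_eq_det _ hsmall, neg_mul, ← tsum_mul_left]
  simp_rw [htrace]
  congr 3 with n
  ring

/-- For a finite group `Γ` and `P ∈ ℂ[Γ]`, with `|λ| · l₁(P) < 1` one has
`exp(-|Γ| · ∑_{n≥1} a_n λ^n / n) = det(1 - λ M_P)`, where `M_P` is left
multiplication by `P` on `ℂ[Γ]`. -/
theorem exp_mahler_eq_det (Γ : Type*) [Group Γ] [Fintype Γ] [DecidableEq Γ]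
    (P : MonoidAlgebra ℂ Γ)
    (a : ℕ → ℂ) (ha : ∀ n, a n = (P ^ n).coeff 1)
    (lam : ℂ) (hl : ‖lam‖ * ∑ g ∈ P.coeff.support, ‖P.coeff g‖ < 1) :
    Complex.exp (-(Fintype.card Γ : ℂ) * ∑' n : ℕ, a (n + 1) * lam ^ (n + 1) / (n + 1)) =
      LinearMap.det
        ((LinearMap.id : MonoidAlgebra ℂ Γ →ₗ[ℂ] MonoidAlgebra ℂ Γ)
          - lam • LinearMap.mulLeft ℂ P) :=
  exp_mahler_eq_det_general Γ P a ha lam hl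
end

section
/- Let Γ = ℤ/m_1ℤ × ⋯ × ℤ/m_hℤ and let P = ∑_{g ∈ Γ} c_g g ∈ ℂ[Γ]. Let l₁(P) be the sum of the absolute values of the coefficients of P, and let λ ∈ ℂ with |λ| · l₁(P) < 1. Then, with a_n = [P^n]_0, one has exp( −|Γ| · ∑_{n=1}^{∞} a_n λ^n / n ) = ∏_{j_1=0}^{m_1−1} ⋯ ∏_{j_h=0}^{m_h−1} ( 1 − λ · ∑_{g ∈ Γ} c_g ξ_{m_1}^{j_1 g_1} ⋯ ξ_{m_h}^{j_h g_h} ), where ξ_m = e^{2πi/m} is a primitive m-th root of unity and g = (g_1,…,g_h). -/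
/-!
The maps `g ↦ ∏ i, ξ_{m_i}^{j_i g_i}` are additive characters of `Γ`, so they extend to algebra
homomorphisms `φ_j : ℂ[Γ] → ℂ`, and by orthogonality `∑_j φ_j(Q) = |Γ| · [Q]_0` for every `Q`.
Applied to `Q = P^n` this gives `|Γ| a_n = ∑_j φ_j(P)^n`. Since `|φ_j(P)| ≤ l₁(P)`, each
`λ φ_j(P)` lies in the unit disc, and summing the series `-log(1 - z) = ∑ z^n / n` over `j`
turns the exponential into `∏_j (1 - λ φ_j(P))`.
-/

open Real

namespace Complex

theorem exp_neg_tsum_sum_pow_div_eq_prod {ι : Type*} [Fintype ι] (z : ι → ℂ)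
    (hz : ∀ j, ‖z j‖ < 1) :
    exp (-∑' n : ℕ, (∑ j, z j ^ (n + 1)) / (n + 1)) = ∏ j, (1 - z j) := by
  have hsum : HasSum (fun n : ℕ => (∑ j, z j ^ (n + 1)) / (n + 1)) (∑ j, -log (1 - z j)) := by
    simp only [Finset.sum_div]
    exact hasSum_sum fun j _ => hasSum_taylorSeries_neg_log' (hz j)
  have hne : ∀ j, 1 - z j ≠ 0 := fun j h => by
    simpa [← sub_eq_zero.mp h] using hz j
  rw [hsum.tsum_eq, Finset.sum_neg_distrib, neg_neg, exp_sum]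
  exact Finset.prod_congr rfl fun j _ => exp_log (hne j)

end Complex

namespace AddMonoidAlgebra

variable {R G : Type*}

theorem lift_toMonoidHom_apply [AddMonoid G] [CommSemiring R] (ψ : AddChar G R)
    (Q : AddMonoidAlgebra R G) :
    lift R R G ψ.toMonoidHom Q = ∑ g ∈ Q.coeff.support, Q.coeff g * ψ g := by
  simp [lift_apply, Finsupp.sum, smul_eq_mul]

theorem norm_lift_toMonoidHom_le [AddLeftCancelMonoid G] [Finite G] [NormedField R]
    (ψ : AddChar G R) (Q : AddMonoidAlgebra R G) :
    ‖lift R R G ψ.toMonoidHom Q‖ ≤ ∑ g ∈ Q.coeff.support, ‖Q.coeff g‖ := by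
  rw [lift_toMonoidHom_apply]
  refine (norm_sum_le _ _).trans_eq (Finset.sum_congr rfl fun g _ => ?_)
  rw [norm_mul, AddChar.norm_apply, mul_one]

theorem sum_lift_toMonoidHom_eq_mul_coeff_zero [AddMonoid G] [DecidableEq G] [CommSemiring R]
    {ι : Type*} [Fintype ι] (ψ : ι → AddChar G R) (N : R)
    (hψ : ∀ g, ∑ j, ψ j g = if g = 0 then N else 0) (Q : AddMonoidAlgebra R G) :
    ∑ j, lift R R G (ψ j).toMonoidHom Q = N * Q.coeff 0 := by
  simp only [lift_toMonoidHom_apply]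
  rw [Finset.sum_comm]
  simp only [← Finset.mul_sum, hψ, mul_ite, mul_zero, Finset.sum_ite_eq']
  split_ifs with h0
  · exact mul_comm _ _
  · rw [Finsupp.notMem_support_iff.mp h0, mul_zero]

end AddMonoidAlgebra

namespace ZMod

variable {ι : Type*} [Fintype ι] {m : ι → ℕ} [∀ i, NeZero (m i)]

noncomputable def piStdAddChar (j : ∀ i, ZMod (m i)) : AddChar (∀ i, ZMod (m i)) ℂ :=
  ∏ i, (stdAddChar.mulShift (j i)).compAddMonoidHom (Pi.evalAddMonoidHom _ i)

theorem piStdAddChar_apply (j g : ∀ i, ZMod (m i)) :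
    piStdAddChar j g = ∏ i, stdAddChar (j i * g i) := by
  simp [piStdAddChar, AddChar.prod_apply, AddChar.mulShift_apply]

theorem piStdAddChar_natCast_apply (j : ι → ℕ) (g : ∀ i, ZMod (m i)) :
    piStdAddChar (fun i => (j i : ZMod (m i))) g =
      ∏ i, Complex.exp (2 * π * Complex.I * (j i : ℂ) * ((g i).val : ℂ) / (m i : ℂ)) := by
  rw [piStdAddChar_apply]
  refine Finset.prod_congr rfl fun i _ => ?_
  conv_lhs => rw [← natCast_zmod_val (g i), ← Nat.cast_mul, stdAddChar_apply, toCircle_natCast]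
  push_cast
  ring_nf

theorem sum_piStdAddChar_apply [DecidableEq ι] (g : ∀ i, ZMod (m i)) :
    ∑ j, piStdAddChar j g = if g = 0 then ∏ i, (m i : ℂ) else 0 := by
  simp only [piStdAddChar_apply]
  rw [← Fintype.prod_sum (fun i (x : ZMod (m i)) => stdAddChar (x * g i))]
  simp only [AddChar.sum_mulShift _ (isPrimitive_stdAddChar _), ZMod.card, Nat.cast_ite,
    Nat.cast_zero, Finset.prod_ite_zero, Finset.mem_univ, true_implies, funext_iff, Pi.zero_apply]

theorem finEquiv_apply (n : ℕ) [NeZero n] (j : Fin n) : finEquiv n j = (j : ℕ) := by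
  obtain ⟨n, rfl⟩ := Nat.exists_eq_succ_of_ne_zero (NeZero.ne n)
  exact (natCast_zmod_val (n := n + 1) j).symm

end ZMod

open AddMonoidAlgebra ZMod in
/-- For `Γ = ℤ/m_1ℤ × ⋯ × ℤ/m_hℤ` and `P ∈ ℂ[Γ]`, with `|λ| · l₁(P) < 1`,
`exp(-|Γ| · ∑_{n≥1} a_n λ^n / n)` equals the product over all character
evaluations `∏_j (1 - λ P(ξ_{m_1}^{j_1}, …, ξ_{m_h}^{j_h}))`. -/
theorem exp_mahler_eq_prod_roots_of_unity (h : ℕ) (m : Fin h → ℕ)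
    (hm : ∀ i, 1 ≤ m i)
    (P : AddMonoidAlgebra ℂ (∀ i : Fin h, ZMod (m i)))
    (a : ℕ → ℂ) (ha : ∀ n, a n = (P ^ n).coeff 0)
    (lam : ℂ) (hl : ‖lam‖ * ∑ g ∈ P.coeff.support, ‖P.coeff g‖ < 1) :
    Complex.exp (-(∏ i, (m i : ℂ)) * ∑' n : ℕ, a (n + 1) * lam ^ (n + 1) / (n + 1)) =
      ∏ j : ∀ i : Fin h, Fin (m i),
        (1 - lam * ∑ g ∈ P.coeff.support,
          P.coeff g * ∏ i, Complex.exp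
            (2 * π * Complex.I * (j i : ℂ) * ((g i).val : ℂ) / (m i : ℂ))) := by
  have : ∀ i, NeZero (m i) := fun i => NeZero.of_pos (hm i)
  let Λ (x : ∀ i, ZMod (m i)) := lift ℂ ℂ _ (piStdAddChar x).toMonoidHom
  have hz (x) : ‖lam * Λ x P‖ < 1 :=
    calc ‖lam * Λ x P‖ ≤ ‖lam‖ * ∑ g ∈ P.coeff.support, ‖P.coeff g‖ := by
          rw [norm_mul]
          exact mul_le_mul_of_nonneg_left (norm_lift_toMonoidHom_le _ _) (norm_nonneg _)
      _ < 1 := hl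
  have hcoeff (n : ℕ) : (∏ i, (m i : ℂ)) * (a (n + 1) * lam ^ (n + 1) / (n + 1)) =
      (∑ x, (lam * Λ x P) ^ (n + 1)) / (n + 1) := by
    simp only [mul_pow, ← Finset.mul_sum, ← map_pow, Λ,
      sum_lift_toMonoidHom_eq_mul_coeff_zero _ _ sum_piStdAddChar_apply, ha]
    ring
  rw [neg_mul, ← tsum_mul_left, tsum_congr hcoeff, Complex.exp_neg_tsum_sum_pow_div_eq_prod _ hz]
  let e : (∀ i, Fin (m i)) ≃ ∀ i, ZMod (m i) := .piCongrRight fun i => (finEquiv (m i)).toEquiv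
  refine (Fintype.prod_equiv e _ _ fun j => ?_).symm
  have hj : e j = fun i => ((j i : ℕ) : ZMod (m i)) := funext fun i => finEquiv_apply _ _
  simp only [hj, Λ, lift_toMonoidHom_apply, piStdAddChar_natCast_apply]
end

section
/- For every n ∈ ℕ, the following identity of natural numbers holds: ∑_{i + j + k = n} (2n)! / ( (i!)² (j!)² (k!)² ) = binom(2n, n) · ∑_{i + j + k = n} ( n! / (i! j! k!) )², where both sums are over triples (i,j,k) of nonnegative integers with i + j + k = n. Equivalently, [P_3^{2n}]_0 = binom(2n,n) · [Q_3^n]_0, relating the closed-walk counts of the cubic lattice ℤ³ and the triangular/honeycomb polynomial Q_3 = (1+x+y)(1+x⁻¹+y⁻¹) over ℤ². -/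
/-! The identity holds termwise: `(2n)! = binom(2n, n) · (n!)²`. -/

theorem Nat.choose_two_mul_mul_factorial_sq (n : ℕ) :
    (2 * n).choose n * n.factorial ^ 2 = (2 * n).factorial := by
  rw [two_mul, sq, ← mul_assoc]
  exact Nat.add_choose_mul_factorial_mul_factorial n n

/-- `∑_{i+j+k=n} (2n)!/((i!)²(j!)²(k!)²) = C(2n,n) · ∑_{i+j+k=n} (n!/(i!j!k!))²`,
relating closed-walk counts of the cubic lattice and the honeycomb polynomial. -/
theorem cubic_eq_choose_mul_triangular (n : ℕ) :
    ∑ j ∈ Finset.Nat.antidiagonalTuple 3 n,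
        ((2 * n).factorial : ℚ) / ∏ i, ((j i).factorial : ℚ) ^ 2 =
      ((2 * n).choose n : ℚ) *
        ∑ j ∈ Finset.Nat.antidiagonalTuple 3 n,
          ((n.factorial : ℚ) / ∏ i, ((j i).factorial : ℚ)) ^ 2 := by
  rw [Finset.mul_sum, ← Nat.choose_two_mul_mul_factorial_sq]
  refine Finset.sum_congr rfl fun j _ => ?_
  rw [div_pow, ← Finset.prod_pow]
  push_cast
  exact mul_div_assoc _ _ _
end

section
/- For every n ∈ ℕ, the following identity holds: ∑_{i + j + k = n} ( n! / (i! j! k!) )² = ∑_{k=0}^{n} binom(n, k)² · binom(2k, k), where the left sum is over triples (i,j,k) of nonnegative integers with i + j + k = n. Equivalently, the constant coefficient of Q_3^n = ((1+x+y)(1+x⁻¹+y⁻¹))^n in ℂ[ℤ²] equals ∑_{k=0}^{n} binom(n,k)² binom(2k,k). -/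
/-!
Splitting a triple as `(i, (j, k))` factors the multinomial coefficient as
`n! / (i! j! k!) = C(n, i) · C(j + k, j)`. For fixed `m = j + k`, Vandermonde's identity gives
`∑_{j+k=m} C(m, j)² = C(2m, m)`, and `C(n, i) = C(n, m)` since `i + m = n`.
-/

open Finset

theorem Nat.multinomial_fin_cons {k : ℕ} (a : ℕ) (x : Fin k → ℕ) :
    Nat.multinomial univ (Fin.cons a x : Fin (k + 1) → ℕ) =
      (a + ∑ i, x i).choose a * Nat.multinomial univ x := by
  rw [Fin.univ_succ, Nat.multinomial_cons]
  simp [Nat.multinomial, Finset.sum_map, Finset.prod_map]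

theorem Nat.cast_multinomial {K α : Type*} [Field K] [CharZero K] (s : Finset α) (f : α → ℕ) :
    (Nat.multinomial s f : K) = (∑ i ∈ s, f i).factorial / ∏ i ∈ s, ((f i).factorial : K) := by
  rw [eq_div_iff (by simp [Finset.prod_ne_zero_iff, Nat.factorial_ne_zero]), mul_comm]
  exact_mod_cast Nat.multinomial_spec s f

theorem Finset.Nat.sum_antidiagonalTuple_succ {M : Type*} [AddCommMonoid M] (k n : ℕ)
    (f : (Fin (k + 1) → ℕ) → M) :
    ∑ x ∈ antidiagonalTuple (k + 1) n, f x =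
      ∑ p ∈ antidiagonal n, ∑ x ∈ antidiagonalTuple k p.2, f (Fin.cons p.1 x) := by
  rw [Finset.sum_sigma']
  refine Finset.sum_nbij' (fun x => ⟨(x 0, ∑ i, Fin.tail x i), Fin.tail x⟩)
    (fun y => Fin.cons y.1.1 y.2) ?_ ?_ ?_ ?_ ?_ <;>
    simp_all [Fin.sum_univ_succ, Nat.mem_antidiagonalTuple, Fin.tail]

namespace Finset.Nat

theorem sum_multinomial_sq_antidiagonalTuple_succ (k n : ℕ) :
    ∑ x ∈ antidiagonalTuple (k + 1) n, Nat.multinomial univ x ^ 2 =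
      ∑ p ∈ antidiagonal n,
        n.choose p.1 ^ 2 * ∑ x ∈ antidiagonalTuple k p.2, Nat.multinomial univ x ^ 2 := by
  rw [sum_antidiagonalTuple_succ]
  refine sum_congr rfl fun p hp => ?_
  rw [mul_sum]
  refine sum_congr rfl fun x hx => ?_
  rw [Nat.multinomial_fin_cons, mem_antidiagonalTuple.mp hx, mem_antidiagonal.mp hp, mul_pow]

theorem sum_multinomial_sq_antidiagonalTuple_two (n : ℕ) :
    ∑ x ∈ antidiagonalTuple 2 n, Nat.multinomial univ x ^ 2 = (2 * n).choose n := by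
  simp only [sum_multinomial_sq_antidiagonalTuple_succ, antidiagonalTuple_one, sum_singleton]
  simp [sum_antidiagonal_eq_sum_range_succ_mk, Nat.sum_range_choose_sq]

theorem sum_multinomial_sq_antidiagonalTuple_three (n : ℕ) :
    ∑ x ∈ antidiagonalTuple 3 n, Nat.multinomial univ x ^ 2 =
      ∑ k ∈ range (n + 1), n.choose k ^ 2 * (2 * k).choose k := by
  rw [sum_multinomial_sq_antidiagonalTuple_succ, ← sum_antidiagonal_swap]
  simp only [Prod.fst_swap, Prod.snd_swap, sum_multinomial_sq_antidiagonalTuple_two]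
  rw [sum_antidiagonal_eq_sum_range_succ (fun k j => n.choose j ^ 2 * (2 * k).choose k)]
  refine sum_congr rfl fun k hk => ?_
  rw [Nat.choose_symm (mem_range_succ_iff.mp hk)]

end Finset.Nat

/-- `∑_{i+j+k=n} (n!/(i!j!k!))² = ∑_{k=0}^{n} C(n,k)² C(2k,k)`. -/
theorem multinomial_sq_sum_eq (n : ℕ) :
    ∑ j ∈ Finset.Nat.antidiagonalTuple 3 n,
        ((n.factorial : ℚ) / ∏ i, ((j i).factorial : ℚ)) ^ 2 =
      ∑ k ∈ Finset.range (n + 1),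
        ((n.choose k : ℚ)) ^ 2 * ((2 * k).choose k : ℚ) := by
  calc ∑ j ∈ Finset.Nat.antidiagonalTuple 3 n,
        ((n.factorial : ℚ) / ∏ i, ((j i).factorial : ℚ)) ^ 2
      = ∑ j ∈ Finset.Nat.antidiagonalTuple 3 n, (Nat.multinomial univ j : ℚ) ^ 2 :=
        sum_congr rfl fun j hj => by
          rw [Nat.cast_multinomial, Finset.Nat.mem_antidiagonalTuple.mp hj]
    _ = _ := mod_cast Finset.Nat.sum_multinomial_sq_antidiagonalTuple_three n
end

section
/- Define a_n = ∑_{k=0}^{n} binom(n, k)² · binom(2k, k) for n ∈ ℕ. Then a_0 = 1, a_1 = 3, and for all n ≥ 2 the recurrence n² · a_n − (10n² − 10n + 3) · a_{n−1} + 9(n−1)² · a_{n−2} = 0 holds. -/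
/-!
Creative telescoping (Zeilberger). With `F(n, k) = C(n,k)² C(2k,k)` and the certificate
`G(n, k) = k³ (4n - 3k) F(n, k)`, one has for every `k`
`n² (n² F(n,k) - (10n² - 10n + 3) F(n-1,k) + 9(n-1)² F(n-2,k)) = G(n,k) - G(n,k+1)`,
a polynomial identity once `F(n-1,k)`, `F(n-2,k)` and `F(n,k+1)` are expressed as rational
multiples of `F(n,k)`. Summing over `k`, the right-hand side telescopes to `0`.
-/

open Finset

namespace Honeycomb

section Binomial

variable {R : Type*} [CommRing R]

theorem cast_add_one_mul_choose_add_one (n k : ℕ) :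
    ((k : R) + 1) * n.choose (k + 1) = ((n : R) - k) * n.choose k := by
  have hmul : ((n : R) + 1) * n.choose k = (n + 1).choose (k + 1) * ((k : R) + 1) := by
    exact_mod_cast congrArg (Nat.cast : ℕ → R) (Nat.add_one_mul_choose_eq n k)
  have hpascal : ((n + 1).choose (k + 1) : R) = n.choose k + n.choose (k + 1) := by
    exact_mod_cast congrArg (Nat.cast : ℕ → R) (Nat.choose_succ_succ n k)
  linear_combination -hmul - ((k : R) + 1) * hpascal

theorem cast_add_one_mul_choose (n k : ℕ) :
    ((n : R) + 1) * n.choose k = ((n : R) + 1 - k) * (n + 1).choose k := by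
  have hmul : ((n : R) + 1) * n.choose k = (n + 1).choose (k + 1) * ((k : R) + 1) := by
    exact_mod_cast congrArg (Nat.cast : ℕ → R) (Nat.add_one_mul_choose_eq n k)
  have hstep := cast_add_one_mul_choose_add_one (R := R) (n + 1) k
  push_cast at hstep
  linear_combination hmul + hstep

end Binomial

def summand (n k : ℕ) : ℤ := (n.choose k : ℤ) ^ 2 * k.centralBinom

def count (n : ℕ) : ℤ := ∑ k ∈ range (n + 1), summand n k

theorem summand_eq_zero_of_lt {n k : ℕ} (h : n < k) : summand n k = 0 := by
  simp [summand, Nat.choose_eq_zero_of_lt h]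

theorem count_eq_sum_range {n N : ℕ} (h : n < N) : count n = ∑ k ∈ range N, summand n k :=
  sum_subset (range_subset_range.2 h) fun _ _ hk =>
    summand_eq_zero_of_lt (by simpa using hk)

theorem add_one_sq_mul_summand (n k : ℕ) :
    ((n : ℤ) + 1) ^ 2 * summand n k = ((n : ℤ) + 1 - k) ^ 2 * summand (n + 1) k := by
  have h := cast_add_one_mul_choose (R := ℤ) n k
  unfold summand
  linear_combination (((n : ℤ) + 1) * n.choose k + ((n : ℤ) + 1 - k) * (n + 1).choose k)
    * k.centralBinom * h

theorem add_one_cube_mul_summand_add_one (n k : ℕ) :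
    ((k : ℤ) + 1) ^ 3 * summand n (k + 1) =
      2 * (2 * k + 1) * ((n : ℤ) - k) ^ 2 * summand n k := by
  have hchoose := cast_add_one_mul_choose_add_one (R := ℤ) n k
  have hcentral : ((k : ℤ) + 1) * (k + 1).centralBinom = 2 * (2 * k + 1) * k.centralBinom := by
    exact_mod_cast Nat.succ_mul_centralBinom_succ k
  unfold summand
  linear_combination (((k : ℤ) + 1) * n.choose (k + 1) + ((n : ℤ) - k) * n.choose k)
    * ((k : ℤ) + 1) * (k + 1).centralBinom * hchoose
    + ((n : ℤ) - k) ^ 2 * n.choose k ^ 2 * hcentral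

def certificate (n k : ℕ) : ℤ := (k : ℤ) ^ 3 * (4 * n - 3 * k) * summand n k

theorem recurrence_summand_eq_certificate_sub (n k : ℕ) :
    ((n : ℤ) + 2) ^ 2 * (((n : ℤ) + 2) ^ 2 * summand (n + 2) k
      - (10 * ((n : ℤ) + 2) ^ 2 - 10 * ((n : ℤ) + 2) + 3) * summand (n + 1) k
      + 9 * ((n : ℤ) + 1) ^ 2 * summand n k)
    = certificate (n + 2) k - certificate (n + 2) (k + 1) := by
  have h0 := add_one_sq_mul_summand n k
  have h1 := add_one_sq_mul_summand (n + 1) k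
  have h2 := add_one_cube_mul_summand_add_one (n + 2) k
  unfold certificate
  push_cast at h1 h2 ⊢
  linear_combination (-(10 * ((n : ℤ) + 2) ^ 2 - 10 * ((n : ℤ) + 2) + 3)) * h1
    + 9 * (((n : ℤ) + 2) ^ 2 * h0 + ((n : ℤ) + 1 - k) ^ 2 * h1)
    + (4 * ((n : ℤ) + 2) - 3 * k - 3) * h2

theorem count_recurrence (n : ℕ) :
    ((n : ℤ) + 2) ^ 2 * count (n + 2)
      - (10 * ((n : ℤ) + 2) ^ 2 - 10 * ((n : ℤ) + 2) + 3) * count (n + 1)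
      + 9 * ((n : ℤ) + 1) ^ 2 * count n = 0 := by
  have htelescope :
      ∑ k ∈ range (n + 3), (certificate (n + 2) k - certificate (n + 2) (k + 1)) = 0 := by
    rw [sum_range_sub']
    simp [certificate, summand_eq_zero_of_lt (show n + 2 < n + 3 by omega)]
  rw [count_eq_sum_range (show n + 2 < n + 3 by omega),
    count_eq_sum_range (show n + 1 < n + 3 by omega), count_eq_sum_range (show n < n + 3 by omega)]
  refine (mul_eq_zero.mp ?_).resolve_left (by positivity : ((n : ℤ) + 2) ^ 2 ≠ 0)
  rw [← htelescope, ← sum_congr rfl fun k _ => recurrence_summand_eq_certificate_sub n k]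
  simp only [mul_sum, mul_add, mul_sub, sum_add_distrib, sum_sub_distrib]

end Honeycomb

/-- The sequence `a_n = ∑_{k=0}^n C(n,k)² C(2k,k)` satisfies
`n² a_n - (10n²-10n+3) a_{n-1} + 9(n-1)² a_{n-2} = 0` with `a_0 = 1`, `a_1 = 3`. -/
theorem honeycomb_recurrence (a : ℕ → ℤ)
    (ha : ∀ n, a n = ∑ k ∈ Finset.range (n + 1),
      (n.choose k : ℤ) ^ 2 * ((2 * k).choose k : ℤ)) :
    a 0 = 1 ∧ a 1 = 3 ∧
    ∀ n : ℕ, 2 ≤ n →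
      (n : ℤ) ^ 2 * a n - (10 * (n : ℤ) ^ 2 - 10 * (n : ℤ) + 3) * a (n - 1)
      + 9 * ((n : ℤ) - 1) ^ 2 * a (n - 2) = 0 := by
  obtain rfl : a = Honeycomb.count := funext ha
  refine ⟨by decide, by decide, fun n hn => ?_⟩
  obtain ⟨m, rfl⟩ := Nat.exists_eq_add_of_le' hn
  simp only [Nat.add_sub_cancel, Nat.add_succ_sub_one]
  push_cast
  linear_combination Honeycomb.count_recurrence m
end

section
/- Define A_n = binom(2n, n) · ∑_{k=0}^{n} binom(n, k)² · binom(2k, k) for n ∈ ℕ (so A_n is the number of closed circuits of length 2n at the origin of the cubic lattice ℤ³). Then A_0 = 1, A_1 = 6, A_2 = 90, and for all n ≥ 2 the recurrence n³ · A_n − 2(2n−1)(10n² − 10n + 3) · A_{n−1} + 36(2n−1)(n−1)(2n−3) · A_{n−2} = 0 holds. -/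
open Finset

/-!
The inner sum `S n = ∑ₖ C(n,k)² C(2k,k)` satisfies
`n² S n = (10n² - 10n + 3) S (n-1) - 9(n-1)² S (n-2)`, by creative telescoping: applied
termwise to the summands, the recurrence gives `R (k+1) - R k` for Zeilberger's certificate
`R k = -2(2k+1)(4n-3-3k) C(n-1,k)² C(2k,k)`, which vanishes at `k = n`. Multiplying by
`C(2n,n)` and using `n C(2n,n) = 2(2n-1) C(2n-2,n-1)` gives the recurrence for `A n`.
-/

namespace Nat

theorem cast_add_one_mul_choose_succ {R : Type*} [CommRing R] (n k : ℕ) :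
    ((k : R) + 1) * n.choose (k + 1) = ((n : R) - k) * n.choose k := by
  rcases le_or_gt k n with hk | hk
  · have h := congrArg (Nat.cast (R := R)) (choose_succ_right_eq n k)
    push_cast [hk] at h
    linear_combination h
  · simp [choose_eq_zero_of_lt hk, choose_eq_zero_of_lt (lt_add_one_of_lt hk)]

theorem cast_sub_mul_choose_succ {R : Type*} [CommRing R] (n k : ℕ) :
    ((n : R) + 1 - k) * (n + 1).choose k = ((n : R) + 1) * n.choose k := by
  rcases le_or_gt k (n + 1) with hk | hk
  · have h := congrArg (Nat.cast (R := R)) (choose_mul_succ_eq n k)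
    push_cast [hk] at h
    linear_combination -h
  · simp [choose_eq_zero_of_lt hk, choose_eq_zero_of_lt (lt_of_succ_lt hk)]

end Nat

def cubicSummand (n k : ℕ) : ℤ := (n.choose k : ℤ) ^ 2 * k.centralBinom

def cubicSum (n : ℕ) : ℤ := ∑ k ∈ range (n + 1), cubicSummand n k

def cubicRecurrenceSummand (m k : ℕ) : ℤ :=
  ((m : ℤ) + 2) ^ 2 * cubicSummand (m + 2) k
    - (10 * ((m : ℤ) + 2) ^ 2 - 10 * ((m : ℤ) + 2) + 3) * cubicSummand (m + 1) k
    + 9 * ((m : ℤ) + 1) ^ 2 * cubicSummand m k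

-- Found by Zeilberger's algorithm.
def cubicCertificate (m k : ℕ) : ℤ :=
  -2 * (2 * (k : ℤ) + 1) * (4 * (m : ℤ) + 5 - 3 * k) * cubicSummand (m + 1) k

theorem cubicSummand_eq_zero_of_lt {n k : ℕ} (h : n < k) : cubicSummand n k = 0 := by
  simp [cubicSummand, Nat.choose_eq_zero_of_lt h]

theorem cubicSum_eq_sum_range {n N : ℕ} (h : n ≤ N) :
    cubicSum n = ∑ k ∈ range (N + 1), cubicSummand n k := by
  refine sum_subset (range_subset_range.mpr (by omega)) fun k _ hkn => ?_
  exact cubicSummand_eq_zero_of_lt (by simpa using hkn)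

theorem cubicRecurrenceSummand_zero (m : ℕ) :
    cubicRecurrenceSummand m 0 = cubicCertificate m 0 := by
  simp only [cubicRecurrenceSummand, cubicCertificate, cubicSummand, Nat.choose_zero_right,
    Nat.centralBinom_zero]
  push_cast
  ring

theorem cubicRecurrenceSummand_succ (m j : ℕ) :
    cubicRecurrenceSummand m (j + 1) = cubicCertificate m (j + 1) - cubicCertificate m j := by
  simp only [cubicRecurrenceSummand, cubicCertificate, cubicSummand]
  qify
  -- everything is a rational multiple of `C(m+1,j)² C(2j,j)`
  have hj : (j : ℚ) + 1 ≠ 0 := by positivity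
  have hm : (m : ℚ) + 1 ≠ 0 := by positivity
  have h₂ : ((m + 2).choose (j + 1) : ℚ) = (m + 2) * (m + 1).choose j / (j + 1) := by
    rw [eq_div_iff hj]
    exact_mod_cast (Nat.add_one_mul_choose_eq (m + 1) j).symm
  have h₁ : ((m + 1).choose (j + 1) : ℚ) = (m + 1 - j) * (m + 1).choose j / (j + 1) := by
    rw [eq_div_iff hj, mul_comm, Nat.cast_add_one_mul_choose_succ]
    push_cast; ring
  have h₀ : (m.choose (j + 1) : ℚ) = (m - j) * (m + 1).choose (j + 1) / (m + 1) := by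
    rw [eq_div_iff hm, mul_comm, ← Nat.cast_sub_mul_choose_succ]
    push_cast; ring
  have hc : ((j + 1).centralBinom : ℚ) = 2 * (2 * j + 1) * j.centralBinom / (j + 1) := by
    rw [eq_div_iff hj, mul_comm]
    exact_mod_cast Nat.succ_mul_centralBinom_succ j
  rw [h₀, h₁, h₂, hc]
  field_simp
  ring

theorem sum_range_cubicRecurrenceSummand (m N : ℕ) :
    ∑ k ∈ range (N + 1), cubicRecurrenceSummand m k = cubicCertificate m N := by
  induction N with
  | zero => simp [cubicRecurrenceSummand_zero]
  | succ N ih => rw [sum_range_succ, ih, cubicRecurrenceSummand_succ]; ring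

theorem cubicSum_recurrence (m : ℕ) :
    ((m : ℤ) + 2) ^ 2 * cubicSum (m + 2)
      - (10 * ((m : ℤ) + 2) ^ 2 - 10 * ((m : ℤ) + 2) + 3) * cubicSum (m + 1)
      + 9 * ((m : ℤ) + 1) ^ 2 * cubicSum m = 0 := by
  have hvanish : cubicCertificate m (m + 2) = 0 := by
    simp [cubicCertificate, cubicSummand_eq_zero_of_lt (Nat.lt_succ_self (m + 1))]
  rw [cubicSum_eq_sum_range (le_refl (m + 2)), cubicSum_eq_sum_range (Nat.le_succ (m + 1)),
    cubicSum_eq_sum_range (Nat.le_add_right m 2), ← hvanish,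
    ← sum_range_cubicRecurrenceSummand, mul_sum, mul_sum, mul_sum, ← sum_sub_distrib,
    ← sum_add_distrib]
  rfl

/-- The number `A_n = C(2n,n) ∑_{k=0}^n C(n,k)² C(2k,k)` of closed circuits of
length `2n` in the cubic lattice satisfies
`n³ A_n - 2(2n-1)(10n²-10n+3) A_{n-1} + 36(2n-1)(n-1)(2n-3) A_{n-2} = 0`. -/
theorem cubic_lattice_recurrence (A : ℕ → ℤ)
    (hA : ∀ n, A n = ((2 * n).choose n : ℤ) * ∑ k ∈ Finset.range (n + 1),
      (n.choose k : ℤ) ^ 2 * ((2 * k).choose k : ℤ)) :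
    A 0 = 1 ∧ A 1 = 6 ∧ A 2 = 90 ∧
    ∀ n : ℕ, 2 ≤ n →
      (n : ℤ) ^ 3 * A n
      - 2 * (2 * (n : ℤ) - 1) * (10 * (n : ℤ) ^ 2 - 10 * (n : ℤ) + 3) * A (n - 1)
      + 36 * (2 * (n : ℤ) - 1) * ((n : ℤ) - 1) * (2 * (n : ℤ) - 3) * A (n - 2) = 0 := by
  have hA' (n : ℕ) : A n = n.centralBinom * cubicSum n := by
    simp [hA, cubicSum, cubicSummand, Nat.centralBinom_eq_two_mul_choose]
  refine ⟨by rw [hA']; decide, by rw [hA']; decide, by rw [hA']; decide, fun n hn => ?_⟩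
  obtain ⟨m, rfl⟩ : ∃ m, n = m + 2 := ⟨n - 2, by omega⟩
  have hc₁ : ((m : ℤ) + 2) * (m + 2).centralBinom = 2 * (2 * m + 3) * (m + 1).centralBinom := by
    exact_mod_cast (Nat.succ_mul_centralBinom_succ (m + 1)).trans (by ring)
  have hc₀ : ((m : ℤ) + 1) * (m + 1).centralBinom = 2 * (2 * m + 1) * m.centralBinom := by
    exact_mod_cast Nat.succ_mul_centralBinom_succ m
  rw [show m + 2 - 1 = m + 1 by rfl, show m + 2 - 2 = m by rfl, hA', hA', hA']
  push_cast
  linear_combination ((m : ℤ) + 2) * (m + 2).centralBinom * cubicSum_recurrence m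
    + ((10 * ((m : ℤ) + 2) ^ 2 - 10 * ((m : ℤ) + 2) + 3) * cubicSum (m + 1)
      - 9 * ((m : ℤ) + 1) ^ 2 * cubicSum m) * hc₁
    - 18 * (2 * (m : ℤ) + 3) * (m + 1) * cubicSum m * hc₀
end

section
/- Define a_n = ∑_{k=0}^{n} binom(n, k)² · binom(2k, k) and b_n = ∑_{j=0}^{n} binom(n, j) · (−3)^{n−j} · a_j for n ∈ ℕ (so b_n counts the closed circuits of length n based at a fixed vertex of the triangular lattice). Then b_0 = 1, b_1 = 0, b_2 = 6, and for all n ≥ 3 the recurrence n² · b_n − n(n−1) · b_{n−1} − 24(n−1)² · b_{n−2} − 36(n−2)(n−1) · b_{n−3} = 0 holds. -/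
/-!
The sequence `a` is Zagier's sporadic sequence `C`; the Wilf–Zeilberger certificate
`G(n, k) = k³ (3k - 4n) C(n,k)² C(2k,k)` shows that it satisfies
`(j+1)² a_{j+1} = (10j² + 10j + 3) a_j - 9j² a_{j-1}`. The binomial transform
`b_n = ∑ C(n,j) c^{n-j} a_j` turns the shift `a_j ↦ a_{j+1}` into `b_n ↦ b_{n+1} - c b_n` and
the multiplication by `j` into `b_{n+1} ↦ (n+1)(b_{n+1} - c b_n)`, so it carries the recurrence
of `a` to one of `b`, which for `c = -3` is the stated recurrence.
-/

open Finset

theorem Nat.cast_choose_mul_succ {R : Type*} [CommRing R] (n k : ℕ) :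
    (n.choose k : R) * (n + 1) = ((n + 1).choose k : R) * (n + 1 - k) := by
  rcases le_or_gt k (n + 1) with hk | hk
  · have h := congrArg (Nat.cast : ℕ → R) (Nat.choose_mul_succ_eq n k)
    push_cast [hk] at h
    exact h
  · simp [Nat.choose_eq_zero_of_lt hk, Nat.choose_eq_zero_of_lt (Nat.lt_of_succ_lt hk)]

theorem Nat.cast_choose_succ_right_mul {R : Type*} [CommRing R] (n k : ℕ) :
    (n.choose (k + 1) : R) * (k + 1) = (n.choose k : R) * (n - k) := by
  rcases le_or_gt k n with hk | hk
  · have h := congrArg (Nat.cast : ℕ → R) (Nat.choose_succ_right_eq n k)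
    push_cast [hk] at h
    exact h
  · simp [Nat.choose_eq_zero_of_lt hk, Nat.choose_eq_zero_of_lt (Nat.lt_succ_of_lt hk)]

theorem Nat.cast_choose_two_mul_succ_mul {R : Type*} [CommRing R] (k : ℕ) :
    ((2 * (k + 1)).choose (k + 1) : R) * (k + 1) = 2 * (2 * k + 1) * ((2 * k).choose k : R) := by
  have h := congrArg (Nat.cast : ℕ → R) (Nat.succ_mul_centralBinom_succ k)
  simp only [Nat.centralBinom_eq_two_mul_choose] at h
  push_cast at h
  linear_combination h

def zagierTerm (n k : ℕ) : ℤ := (n.choose k : ℤ) ^ 2 * ((2 * k).choose k : ℤ)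

def zagierC (n : ℕ) : ℤ := ∑ k ∈ range (n + 1), zagierTerm n k

def zagierCertificate (n k : ℕ) : ℤ := (k : ℤ) ^ 3 * (3 * k - 4 * n) * zagierTerm n k

theorem zagierTerm_wz (n k : ℕ) :
    ((n : ℤ) + 2) ^ 2 * (((n : ℤ) + 2) ^ 2 * zagierTerm (n + 2) k
      - (10 * ((n : ℤ) + 2) ^ 2 - 10 * ((n : ℤ) + 2) + 3) * zagierTerm (n + 1) k
      + 9 * ((n : ℤ) + 1) ^ 2 * zagierTerm n k)
    = zagierCertificate (n + 2) (k + 1) - zagierCertificate (n + 2) k := by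
  have r1 := Nat.cast_choose_mul_succ (R := ℤ) (n + 1) k
  have r0 := Nat.cast_choose_mul_succ (R := ℤ) n k
  have rk := Nat.cast_choose_succ_right_mul (R := ℤ) (n + 2) k
  have rc := Nat.cast_choose_two_mul_succ_mul (R := ℤ) k
  simp only [zagierCertificate, zagierTerm]
  push_cast at r1 r0 rk rc ⊢
  set X : ℤ := ((n + 2).choose k : ℤ)
  set Y : ℤ := ((n + 1).choose k : ℤ)
  set Z : ℤ := (n.choose k : ℤ)
  set W : ℤ := ((n + 2).choose (k + 1) : ℤ)
  set V : ℤ := ((2 * (k + 1)).choose (k + 1) : ℤ)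
  set U : ℤ := ((2 * k).choose k : ℤ)
  set N : ℤ := (n : ℤ) + 2
  -- The ratio relations hold for every `k` (out-of-range binomials vanish on both sides), and they
  -- reduce both sides to multiples of `X ^ 2 * U`.
  linear_combination
    (9 * U * (N - 1 - k) ^ 2 - (10 * N ^ 2 - 10 * N + 3) * U) * (Y * N + X * (N - k)) * r1
    + 9 * U * N ^ 2 * (Z * (N - 1) + Y * (N - 1 - k)) * r0
    - (3 * k + 3 - 4 * N) * (N - k) ^ 2 * X ^ 2 * rc
    - (3 * k + 3 - 4 * N) * (k + 1) * V * (W * (k + 1) + X * (N - k)) * rk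

theorem zagierC_eq_sum_range {n N : ℕ} (h : n < N) :
    zagierC n = ∑ k ∈ range N, zagierTerm n k :=
  sum_subset (range_subset_range.mpr h) fun k _ hk => by
    simp [zagierTerm, Nat.choose_eq_zero_of_lt (not_lt.mp (mt mem_range.mpr hk))]

-- At `j = 0` the truncated `j - 1` is harmless: it carries the factor `j ^ 2`.
theorem zagierC_recurrence (j : ℕ) :
    ((j : ℤ) + 1) ^ 2 * zagierC (j + 1) - (10 * (j : ℤ) ^ 2 + 10 * j + 3) * zagierC j
      + 9 * (j : ℤ) ^ 2 * zagierC (j - 1) = 0 := by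
  cases j with
  | zero => rfl
  | succ n =>
    have telescope : ((n : ℤ) + 2) ^ 2 * (((n : ℤ) + 2) ^ 2 * zagierC (n + 2)
        - (10 * ((n : ℤ) + 2) ^ 2 - 10 * ((n : ℤ) + 2) + 3) * zagierC (n + 1)
        + 9 * ((n : ℤ) + 1) ^ 2 * zagierC n) = 0 := by
      rw [zagierC_eq_sum_range (N := n + 3) (by omega),
        zagierC_eq_sum_range (N := n + 3) (by omega), zagierC_eq_sum_range (N := n + 3) (by omega)]
      simp only [mul_sum, ← sum_sub_distrib, ← sum_add_distrib, zagierTerm_wz, sum_range_sub]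
      simp [zagierCertificate, zagierTerm]
    have hne : ((n : ℤ) + 2) ^ 2 ≠ 0 := by positivity
    push_cast
    linear_combination (mul_eq_zero.mp telescope).resolve_left hne

section BinomialTransform

variable {R : Type*} [CommRing R]

def binomialTransform (c : R) (f : ℕ → R) (n : ℕ) : R :=
  ∑ j ∈ range (n + 1), (n.choose j : R) * c ^ (n - j) * f j

variable (c : R) (f g : ℕ → R) (n : ℕ)

theorem binomialTransform_add : binomialTransform c (fun j => f j + g j) n
    = binomialTransform c f n + binomialTransform c g n := by
  simp only [binomialTransform, mul_add, sum_add_distrib]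

theorem binomialTransform_sub : binomialTransform c (fun j => f j - g j) n
    = binomialTransform c f n - binomialTransform c g n := by
  simp only [binomialTransform, mul_sub, sum_sub_distrib]

theorem binomialTransform_const_mul (r : R) :
    binomialTransform c (fun j => r * f j) n = r * binomialTransform c f n := by
  simp only [binomialTransform, mul_sum]
  exact sum_congr rfl fun _ _ => by ring

theorem binomialTransform_shift : binomialTransform c (fun j => f (j + 1)) n
    = binomialTransform c f (n + 1) - c * binomialTransform c f n := by
  have h := sum_choose_succ_mul (fun i e => c ^ e * f i) n
  simp only [binomialTransform, mul_sum, ← mul_assoc] at h ⊢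
  have hc : ∑ j ∈ range (n + 1), (n.choose j : R) * c ^ (n + 1 - j) * f j
      = ∑ j ∈ range (n + 1), c * (n.choose j : R) * c ^ (n - j) * f j :=
    sum_congr rfl fun j hj => by
      rw [Nat.sub_add_comm (Nat.lt_succ_iff.mp (mem_range.mp hj)), pow_succ]
      ring
  rw [h, hc]
  ring

theorem binomialTransform_natCast_mul : binomialTransform c (fun j => (j : R) * f j) (n + 1)
    = (n + 1) * binomialTransform c (fun j => f (j + 1)) n := by
  rw [binomialTransform, sum_range_succ', binomialTransform, mul_sum]
  simp only [Nat.cast_zero, zero_mul, mul_zero, add_zero, Nat.add_sub_add_right]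
  refine sum_congr rfl fun j _ => ?_
  have h := congrArg (Nat.cast : ℕ → R) (Nat.add_one_mul_choose_eq n j)
  push_cast at h ⊢
  linear_combination -(c ^ (n - j) * f (j + 1)) * h

end BinomialTransform

theorem binomialTransform_neg_three_recurrence {R : Type*} [CommRing R] (a : ℕ → R)
    (ha : ∀ j : ℕ, ((j : R) + 1) ^ 2 * a (j + 1) - (10 * (j : R) ^ 2 + 10 * j + 3) * a j
      + 9 * (j : R) ^ 2 * a (j - 1) = 0) (m : ℕ) :
    let b := binomialTransform (-3) a
    ((m : R) + 3) ^ 2 * b (m + 3) - ((m : R) + 3) * ((m : R) + 2) * b (m + 2)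
      - 24 * ((m : R) + 2) ^ 2 * b (m + 1) - 36 * ((m : R) + 1) * ((m : R) + 2) * b m = 0 := by
  have h : binomialTransform (-3) (fun j => ((j : R) + 1) ^ 2 * a (j + 1)
      - (10 * (j : R) ^ 2 + 10 * j + 3) * a j + 9 * (j : R) ^ 2 * a (j - 1)) (m + 2) = 0 := by
    simp only [binomialTransform, ha, mul_zero, sum_const_zero]
  simp only [sq, add_mul, mul_add, mul_one, one_mul, mul_assoc, binomialTransform_add,
    binomialTransform_sub, binomialTransform_const_mul, binomialTransform_natCast_mul,
    binomialTransform_shift (-3) a, binomialTransform_shift (-3) (fun j => a (j + 1)),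
    binomialTransform_shift (-3) (fun j => a (j + 1 + 1)), Nat.cast_add, Nat.cast_one,
    Nat.add_sub_cancel] at h
  linear_combination h

/-- The number `b_n = ∑_{j=0}^n C(n,j) (-3)^{n-j} a_j` (with
`a_j = ∑_k C(j,k)² C(2k,k)`) of closed circuits of length `n` in the triangular
lattice satisfies `n² b_n - n(n-1) b_{n-1} - 24(n-1)² b_{n-2} - 36(n-2)(n-1) b_{n-3} = 0`. -/
theorem triangular_lattice_recurrence (a b : ℕ → ℤ)
    (ha : ∀ n, a n = ∑ k ∈ Finset.range (n + 1),
      (n.choose k : ℤ) ^ 2 * ((2 * k).choose k : ℤ))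
    (hb : ∀ n, b n = ∑ j ∈ Finset.range (n + 1),
      (n.choose j : ℤ) * (-3) ^ (n - j) * a j) :
    b 0 = 1 ∧ b 1 = 0 ∧ b 2 = 6 ∧
    ∀ n : ℕ, 3 ≤ n →
      (n : ℤ) ^ 2 * b n - (n : ℤ) * ((n : ℤ) - 1) * b (n - 1)
      - 24 * ((n : ℤ) - 1) ^ 2 * b (n - 2)
      - 36 * ((n : ℤ) - 2) * ((n : ℤ) - 1) * b (n - 3) = 0 := by
  obtain rfl : a = zagierC := funext ha
  obtain rfl : b = binomialTransform (-3) zagierC := funext hb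
  refine ⟨rfl, rfl, rfl, fun n hn => ?_⟩
  obtain ⟨m, rfl⟩ : ∃ m, n = m + 3 := ⟨n - 3, by omega⟩
  have h := binomialTransform_neg_three_recurrence zagierC zagierC_recurrence m
  simp only [Nat.add_sub_cancel, show m + 3 - 1 = m + 2 by omega, show m + 3 - 2 = m + 1 by omega]
  push_cast
  linear_combination h
end

section
/- Let a : ℕ → ℂ and let t ∈ ℂ with |t| < 1 be such that the series ∑_{j=0}^{∞} |a_j| · ( |t| / (1 − |t|) )^j converges. Then the series ∑_{n=0}^{∞} ( ∑_{j=0}^{n} binom(n, j) · a_j ) t^n converges and equals (1 / (1 − t)) · ∑_{j=0}^{∞} a_j · ( t / (1 − t) )^j. -/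
/-!
Write `c_n t^n` as the antidiagonal sum `∑_{j+m=n} F(j, m)` of the double series
`F(j, m) = a_j C(m+j, j) t^(m+j)`. Summing `F` over `m` first gives
`a_j t^j / (1-t)^(j+1)` by the negative binomial series. The hypothesis says that the same
computation for `‖a_j‖` and `‖t‖` converges, i.e. that `F` is absolutely summable, which
justifies the rearrangement.
-/

open Finset

section

variable {α A : Type*} [AddCommMonoid α] [TopologicalSpace α] [ContinuousAdd α] [RegularSpace α]
  [AddMonoid A] [HasAntidiagonal A]

theorem HasSum.sum_antidiagonal {f : A × A → α} {s : α} (h : HasSum f s) :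
    HasSum (fun n ↦ ∑ kl ∈ antidiagonal n, f kl) s :=
  (HasAntidiagonal.sigmaAntidiagonalEquivProd.hasSum_iff.2 h).sigma fun n ↦
    (antidiagonal n).hasSum f

end

section

variable {𝕜 : Type*} [NormedField 𝕜]

theorem hasSum_choose_mul_pow_add (j : ℕ) {t : 𝕜} (ht : ‖t‖ < 1) :
    HasSum (fun m ↦ ((m + j).choose j : 𝕜) * t ^ (m + j)) ((1 - t)⁻¹ * (t / (1 - t)) ^ j) := by
  have h1t : 1 - t ≠ 0 := sub_ne_zero.2 fun h ↦ by simp [← h] at ht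
  have hsum : (1 - t)⁻¹ * (t / (1 - t)) ^ j = 1 / (1 - t) ^ (j + 1) * t ^ j := by
    rw [div_pow, pow_succ]; field_simp
  rw [hsum]
  exact ((hasSum_choose_mul_geometric_of_norm_lt_one j ht).mul_right (t ^ j)).congr_fun
    fun m ↦ by rw [pow_add, mul_assoc]

def binomialDoubleTerm (a : ℕ → 𝕜) (t : 𝕜) (p : ℕ × ℕ) : 𝕜 :=
  a p.1 * ((p.2 + p.1).choose p.1 * t ^ (p.2 + p.1))

theorem norm_binomialDoubleTerm_le (a : ℕ → 𝕜) (t : 𝕜) (p : ℕ × ℕ) :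
    ‖binomialDoubleTerm a t p‖ ≤ binomialDoubleTerm (‖a ·‖) ‖t‖ p := by
  simp only [binomialDoubleTerm, norm_mul, norm_pow]
  gcongr
  simpa using Nat.norm_cast_le (α := 𝕜) _

theorem hasSum_binomialDoubleTerm_fiber (a : ℕ → 𝕜) {t : 𝕜} (ht : ‖t‖ < 1) (j : ℕ) :
    HasSum (fun m ↦ binomialDoubleTerm a t (j, m)) (a j * ((1 - t)⁻¹ * (t / (1 - t)) ^ j)) :=
  (hasSum_choose_mul_pow_add j ht).mul_left (a j)

theorem sum_antidiagonal_binomialDoubleTerm (a : ℕ → 𝕜) (t : 𝕜) (n : ℕ) :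
    ∑ p ∈ antidiagonal n, binomialDoubleTerm a t p =
      (∑ j ∈ range (n + 1), (n.choose j : 𝕜) * a j) * t ^ n := by
  rw [Nat.sum_antidiagonal_eq_sum_range_succ_mk, sum_mul]
  refine sum_congr rfl fun j hj ↦ ?_
  rw [binomialDoubleTerm, Nat.sub_add_cancel (Nat.lt_succ_iff.1 (mem_range.1 hj))]
  ring

theorem summable_binomialDoubleTerm_norm (a : ℕ → 𝕜) {t : 𝕜} (ht : ‖t‖ < 1)
    (ha : Summable fun j ↦ ‖a j‖ * (‖t‖ / (1 - ‖t‖)) ^ j) :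
    Summable (binomialDoubleTerm (‖a ·‖) ‖t‖) := by
  have hr : ‖‖t‖‖ < 1 := by rwa [norm_norm]
  have hfiber := hasSum_binomialDoubleTerm_fiber (‖a ·‖) hr
  refine (summable_prod_of_nonneg fun p ↦ ?_).2 ⟨fun j ↦ (hfiber j).summable, ?_⟩
  · unfold binomialDoubleTerm; positivity
  · simp_rw [(hfiber _).tsum_eq, mul_left_comm _ (1 - ‖t‖)⁻¹]
    exact ha.mul_left _

theorem hasSum_binomialTransform_mul_pow [CompleteSpace 𝕜] (a : ℕ → 𝕜) {t : 𝕜} (ht : ‖t‖ < 1)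
    (ha : Summable fun j ↦ ‖a j‖ * (‖t‖ / (1 - ‖t‖)) ^ j) :
    HasSum (fun n ↦ (∑ j ∈ range (n + 1), (n.choose j : 𝕜) * a j) * t ^ n)
      ((1 - t)⁻¹ * ∑' j, a j * (t / (1 - t)) ^ j) := by
  have hF := (Summable.of_nonneg_of_le (fun _ ↦ norm_nonneg _) (norm_binomialDoubleTerm_le a t)
    (summable_binomialDoubleTerm_norm a ht ha)).of_norm.hasSum
  have hvalue : ∑' p, binomialDoubleTerm a t p = (1 - t)⁻¹ * ∑' j, a j * (t / (1 - t)) ^ j := by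
    rw [(hF.prod_fiberwise (hasSum_binomialDoubleTerm_fiber a ht)).tsum_eq.symm, ← tsum_mul_left]
    simp_rw [mul_left_comm]
  rw [← hvalue]
  simpa only [sum_antidiagonal_binomialDoubleTerm] using hF.sum_antidiagonal

end

/-- Binomial transform of generating functions: if `c_n = ∑_{j≤n} C(n,j) a_j`,
then `∑ c_n t^n = (1/(1-t)) ∑ a_j (t/(1-t))^j` in the indicated region of
absolute convergence. -/
theorem binomial_transform_generating_function (a : ℕ → ℂ) (t : ℂ)
    (ht : ‖t‖ < 1)
    (hconv : Summable fun j : ℕ =>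
      ‖a j‖ * (‖t‖ / (1 - ‖t‖)) ^ j) :
    Summable (fun n : ℕ => (∑ j ∈ Finset.range (n + 1), (n.choose j : ℂ) * a j) * t ^ n) ∧
    ∑' n : ℕ, (∑ j ∈ Finset.range (n + 1), (n.choose j : ℂ) * a j) * t ^ n =
      (1 / (1 - t)) * ∑' j : ℕ, a j * (t / (1 - t)) ^ j := by
  have h := hasSum_binomialTransform_mul_pow a ht hconv
  exact ⟨h.summable, by rw [h.tsum_eq, one_div]⟩
end

section
/- Let F₂ be the free group on two generators x and y, and let Q = (1 + x + y)(1 + x⁻¹ + y⁻¹) ∈ ℂ[F₂]. Set a_n = [Q^n]_0. Then a_0 = 1, a_1 = 3, and for all n ≥ 2 the recurrence n · a_n − (17n − 12) · a_{n−1} + 36(2n − 3) · a_{n−2} = 0 holds. -/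
/-!
Write `x = of 0`, `y = of 1`. Expanding, `Q = 3 + A` with `A` the sum of the six elements
`x^{±1}, y^{±1}, xy⁻¹, yx⁻¹`. Their Cayley graph is a tree of triangles, each vertex lying on three
triangles, and `triangleNorm g` is the distance from `1` to `g`. This graph is distance-regular, so
`[Qⁿ]_g` only depends on `k = triangleNorm g`: it is the `n`-th coefficient of `G Wᵏ`, where the
power series `G` and `W` are fixed by `G = 1 + X (3G + 6GW)` (the step at the origin) and
`W = X (1 + 2W)²` (the step away from it). Solving, `1 + 2W = B(X) = C(2X)` with `C` the Catalan
series, and `G = (1 - 3XB)⁻¹`. Eliminating `B` gives `(1 - 9X) G² + G = 2`; differentiating yields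
`(1 - 9X)(1 - 8X) G' = (5 - 36X) G - 2`, whose coefficients satisfy the recurrence.
-/

open PowerSeries

namespace FreeGroup

variable {α : Type*}

/-- The length of a reduced word in which every block `a b⁻¹` counts as a single letter. -/
def triangleLength : List (α × Bool) → ℕ
  | [] => 0
  | (_, true) :: (_, false) :: t => triangleLength t + 1
  | _ :: t => triangleLength t + 1

@[simp] lemma triangleLength_nil : triangleLength ([] : List (α × Bool)) = 0 := rfl

@[simp] lemma triangleLength_inv_cons (a : α) (t : List (α × Bool)) :
    triangleLength ((a, false) :: t) = triangleLength t + 1 := by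
  cases t <;> rfl

@[simp] lemma triangleLength_singleton (l : α × Bool) : triangleLength [l] = 1 := by
  obtain ⟨a, _ | _⟩ := l <;> rfl

@[simp] lemma triangleLength_of_cons_inv_cons (a b : α) (t : List (α × Bool)) :
    triangleLength ((a, true) :: (b, false) :: t) = triangleLength t + 1 := rfl

@[simp] lemma triangleLength_of_cons_of_cons (a b : α) (t : List (α × Bool)) :
    triangleLength ((a, true) :: (b, true) :: t) = triangleLength ((b, true) :: t) + 1 := rfl

lemma triangleLength_eq_zero {w : List (α × Bool)} : triangleLength w = 0 ↔ w = [] := by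
  refine ⟨fun h => ?_, fun h => h ▸ rfl⟩
  rcases w with _ | ⟨⟨a, _ | _⟩, _ | ⟨⟨b, _ | _⟩, t⟩⟩ <;> simp_all

variable [DecidableEq α]

def triangleNorm (g : FreeGroup α) : ℕ := triangleLength g.toWord

lemma triangleNorm_eq_zero {g : FreeGroup α} : triangleNorm g = 0 ↔ g = 1 := by
  rw [triangleNorm, triangleLength_eq_zero, toWord_eq_nil_iff]

def consCancel (l : α × Bool) : List (α × Bool) → List (α × Bool)
  | [] => [l]
  | h :: t => if l.1 = h.1 ∧ l.2 = !h.2 then t else l :: h :: t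

@[simp] lemma consCancel_nil (l : α × Bool) : consCancel l [] = [l] := rfl

@[simp] lemma consCancel_cons (l h : α × Bool) (t : List (α × Bool)) :
    consCancel l (h :: t) = if l.1 = h.1 ∧ l.2 = !h.2 then t else l :: h :: t := rfl

lemma toWord_mk_singleton_mul (l : α × Bool) (g : FreeGroup α) :
    (mk [l] * g).toWord = consCancel l g.toWord := by
  conv_lhs => rw [← mk_toWord (x := g)]
  rw [mul_mk, toWord_mk, List.singleton_append, reduce.cons, reduce_toWord]
  cases g.toWord <;> rfl

lemma toWord_of_mul (a : α) (g : FreeGroup α) :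
    (of a * g).toWord = consCancel (a, true) g.toWord :=
  toWord_mk_singleton_mul (a, true) g

lemma toWord_of_inv_mul (a : α) (g : FreeGroup α) :
    ((of a)⁻¹ * g).toWord = consCancel (a, false) g.toWord :=
  toWord_mk_singleton_mul (a, false) g

end FreeGroup

section AdjRadial

variable {M : Type*} [AddCommMonoid M]

/-- A vertex at distance `k + 1` from `1` in the tree of triangles has one neighbour at distance
`k`, one at distance `k + 1` and four at distance `k + 2`; the origin has six at distance `1`. -/
def adjRadial (φ : ℕ → M) : ℕ → M
  | 0 => 6 • φ 1
  | k + 1 => φ k + φ (k + 1) + 4 • φ (k + 2)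

open FreeGroup in
lemma sum_triangleNorm_neighbours (φ : ℕ → M) (g : FreeGroup (Fin 2)) :
    φ (triangleNorm ((of 0)⁻¹ * g)) + φ (triangleNorm (of 0 * g))
      + φ (triangleNorm ((of 1)⁻¹ * g)) + φ (triangleNorm (of 1 * g))
      + φ (triangleNorm (of 1 * ((of 0)⁻¹ * g)))
      + φ (triangleNorm (of 0 * ((of 1)⁻¹ * g)))
      = adjRadial φ (triangleNorm g) := by
  simp only [triangleNorm, toWord_of_mul, toWord_of_inv_mul]
  have hw := isReduced_toWord (x := g)
  generalize g.toWord = w at hw ⊢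
  rcases w with _ | ⟨⟨a, _ | _⟩, _ | ⟨⟨b, _ | _⟩, t⟩⟩ <;> (try fin_cases a) <;> (try fin_cases b) <;>
    simp [adjRadial, isReduced_cons_cons] at hw ⊢ <;> abel

end AdjRadial

@[simp] lemma PowerSeries.coeff_ofNat_mul {R : Type*} [Semiring R] {a : ℕ} [a.AtLeastTwo]
    (n : ℕ) (f : R⟦X⟧) : coeff n ((ofNat(a) : R⟦X⟧) * f) = ofNat(a) * coeff n f := by
  rw [← map_ofNat C, coeff_C_mul]

lemma PowerSeries.derivative_ofNat {R : Type*} [CommSemiring R] {a : ℕ} [a.AtLeastTwo] :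
    d⁄dX R (ofNat(a) : R⟦X⟧) = 0 := by
  rw [← map_ofNat C, derivative_C]

lemma PowerSeries.coeff_X_mul_derivative {R : Type*} [CommSemiring R] (f : R⟦X⟧) (n : ℕ) :
    coeff n (X * d⁄dX R f) = n * coeff n f := by
  cases n with
  | zero => simp
  | succ n => rw [coeff_succ_X_mul, coeff_derivative, mul_comm]; push_cast; ring

lemma MonoidAlgebra.coeff_one_add_single_add_single_mul {R G : Type*} [Semiring R] [Group G]
    (u v : G) (f : MonoidAlgebra R G) (g : G) :
    ((1 + single u 1 + single v 1) * f).coeff g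
      = f.coeff g + f.coeff (u⁻¹ * g) + f.coeff (v⁻¹ * g) := by
  simp [add_mul, coeff_add]

namespace TriangleTree

noncomputable section

def B : ℂ⟦X⟧ := rescale 2 (map (Nat.castRingHom ℂ) catalanSeries)

lemma B_eq : B = 1 + 2 * X * B ^ 2 := by
  have h := congrArg (rescale (2 : ℂ) ∘ map (Nat.castRingHom ℂ)) catalanSeries_sq_mul_X_add_one
  simp only [Function.comp, map_add, map_mul, map_pow, map_X, map_one, rescale_X,
    map_ofNat C 2] at h
  change B ^ 2 * (2 * X) + 1 = B at h
  linear_combination -h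

def W : ℂ⟦X⟧ := X * B ^ 2

def G : ℂ⟦X⟧ := (1 - 3 * X * B)⁻¹

lemma one_sub_mul_G : (1 - 3 * X * B) * G = 1 :=
  PowerSeries.mul_inv_cancel _ (by simp)

lemma constantCoeff_G : constantCoeff G = 1 := by
  simpa using congrArg constantCoeff one_sub_mul_G

def radialCoeff (n k : ℕ) : ℂ := coeff n (G * W ^ k)

lemma radialCoeff_zero_left (k : ℕ) : radialCoeff 0 k = if k = 0 then 1 else 0 := by
  cases k <;> simp [radialCoeff, constantCoeff_G, W]

lemma G_eq : G = 1 + X * (3 * G + 6 * (G * W)) := by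
  rw [W]; linear_combination one_sub_mul_G + 3 * X * G * B_eq

lemma G_mul_W_pow_succ (k : ℕ) :
    G * W ^ (k + 1) = X * (G * W ^ k + 4 * (G * W ^ (k + 1)) + 4 * (G * W ^ (k + 2))) := by
  rw [W]; linear_combination (X * G * (X * B ^ 2) ^ k * (B + 1 + 2 * X * B ^ 2)) * B_eq

lemma radialCoeff_succ (n k : ℕ) :
    radialCoeff (n + 1) k = 3 * radialCoeff n k + adjRadial (radialCoeff n) k := by
  cases k with
  | zero =>
    have h := congrArg (coeff (n + 1)) G_eq
    simp only [map_add, coeff_succ_X_mul, coeff_ofNat_mul, coeff_one] at h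
    simpa [radialCoeff, adjRadial] using h
  | succ k =>
    have h := congrArg (coeff (n + 1)) (G_mul_W_pow_succ k)
    simp only [map_add, coeff_succ_X_mul, coeff_ofNat_mul] at h
    simp only [radialCoeff, adjRadial, nsmul_eq_mul, h, Nat.cast_ofNat]
    ring

lemma coeff_one_G : coeff 1 G = 3 := by
  simpa [radialCoeff, radialCoeff_zero_left, adjRadial, constantCoeff_G, W] using
    radialCoeff_succ 0 0

lemma G_quadratic : (1 - 9 * X) * G ^ 2 + G = 2 := by
  linear_combination (9 * X * G ^ 2) * B_eq + (2 * ((1 - 3 * X * B) * G + 1) - G) * one_sub_mul_G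

lemma G_ode : (1 - 9 * X) * (1 - 8 * X) * d⁄dX ℂ G = (5 - 36 * X) * G - 2 := by
  have hderiv : (2 * (1 - 9 * X) * G + 1) * d⁄dX ℂ G = 9 * G ^ 2 := by
    have h := congrArg (d⁄dX ℂ) G_quadratic
    simp only [map_add, map_sub, Derivation.leibniz, Derivation.leibniz_pow, derivative_ofNat,
      derivative_X, Derivation.map_one_eq_zero, smul_eq_mul, nsmul_eq_mul] at h
    linear_combination h
  refine mul_left_cancel₀ (show (9 : ℂ⟦X⟧) ≠ 0 by rw [← map_ofNat C 9]; simp) ?_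
  linear_combination (1 - 9 * X) * (2 * (1 - 9 * X) * G + 1) * hderiv
    + (9 * (2 * (1 - 9 * X) * G + 1) - 18 - 4 * (1 - 9 * X) ^ 2 * d⁄dX ℂ G) * G_quadratic

lemma coeff_G_recurrence (n : ℕ) (hn : 2 ≤ n) :
    (n : ℂ) * coeff n G - (17 * n - 12) * coeff (n - 1) G + 36 * (2 * n - 3) * coeff (n - 2) G
      = 0 := by
  obtain ⟨m, rfl⟩ := Nat.exists_eq_add_of_le' hn
  have h := congrArg (coeff (m + 1)) (show d⁄dX ℂ G - 17 * (X * d⁄dX ℂ G)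
      + 72 * (X * (X * d⁄dX ℂ G)) = 5 * G - 36 * (X * G) - 2 by linear_combination G_ode)
  simp only [map_add, map_sub, coeff_ofNat_mul, coeff_succ_X_mul, coeff_X_mul_derivative,
    coeff_derivative] at h
  rw [← map_ofNat C 2, coeff_C] at h
  simp only [Nat.add_sub_cancel, show m + 2 - 1 = m + 1 by omega]
  push_cast at h ⊢
  linear_combination h

section GroupRing

open FreeGroup MonoidAlgebra

def Q : MonoidAlgebra ℂ (FreeGroup (Fin 2)) :=
  (1 + single (of 0) (1 : ℂ) + single (of 1) (1 : ℂ))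
    * (1 + single (of 0)⁻¹ (1 : ℂ) + single (of 1)⁻¹ (1 : ℂ))

lemma coeff_Q_mul (f : MonoidAlgebra ℂ (FreeGroup (Fin 2))) (g : FreeGroup (Fin 2)) :
    (Q * f).coeff g = 3 * f.coeff g + (f.coeff ((of 0)⁻¹ * g) + f.coeff (of 0 * g)
      + f.coeff ((of 1)⁻¹ * g) + f.coeff (of 1 * g) + f.coeff (of 1 * ((of 0)⁻¹ * g))
      + f.coeff (of 0 * ((of 1)⁻¹ * g))) := by
  simp only [Q, mul_assoc, coeff_one_add_single_add_single_mul, inv_inv, mul_inv_cancel_left]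
  ring

lemma coeff_Q_pow (n : ℕ) (g : FreeGroup (Fin 2)) :
    (Q ^ n).coeff g = radialCoeff n (triangleNorm g) := by
  induction n generalizing g with
  | zero =>
    rw [pow_zero, one_def, coeff_single, Finsupp.single_apply, radialCoeff_zero_left]
    simp only [triangleNorm_eq_zero, @eq_comm _ (1 : FreeGroup (Fin 2)) g]
  | succ n ih =>
    rw [pow_succ', coeff_Q_mul, radialCoeff_succ, ← sum_triangleNorm_neighbours]
    simp only [ih]

end GroupRing

end

end TriangleTree

/-- For `Q = (1+x+y)(1+x⁻¹+y⁻¹)` in the group ring of the free group on two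
generators, the constant coefficients `a_n = [Q^n]_0` satisfy `a_0 = 1`, `a_1 = 3`,
and `n a_n - (17n-12) a_{n-1} + 36(2n-3) a_{n-2} = 0` for `n ≥ 2`. -/
theorem free_group_Q_recurrence
    (Q : MonoidAlgebra ℂ (FreeGroup (Fin 2)))
    (hQ : Q = (1 + MonoidAlgebra.single (FreeGroup.of 0) (1 : ℂ)
                 + MonoidAlgebra.single (FreeGroup.of 1) (1 : ℂ)) *
              (1 + MonoidAlgebra.single (FreeGroup.of 0)⁻¹ (1 : ℂ)
                 + MonoidAlgebra.single (FreeGroup.of 1)⁻¹ (1 : ℂ)))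
    (a : ℕ → ℂ) (ha : ∀ n, a n = (Q ^ n).coeff 1) :
    a 0 = 1 ∧ a 1 = 3 ∧
    ∀ n : ℕ, 2 ≤ n →
      (n : ℂ) * a n - (17 * (n : ℂ) - 12) * a (n - 1)
      + 36 * (2 * (n : ℂ) - 3) * a (n - 2) = 0 := by
  obtain rfl : Q = TriangleTree.Q := hQ
  have ha' (n : ℕ) : a n = coeff n TriangleTree.G := by
    simp [ha, TriangleTree.coeff_Q_pow, TriangleTree.radialCoeff, FreeGroup.triangleNorm]
  refine ⟨?_, ?_, fun n hn => by simpa only [ha'] using TriangleTree.coeff_G_recurrence n hn⟩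
  · simp [ha', TriangleTree.constantCoeff_G]
  · simp [ha', TriangleTree.coeff_one_G]
end

section
/- Let Γ be the group presented by ⟨x, y | x²y = yx², y²x = xy²⟩ (the presented group on two generators with relators x²yx⁻²y⁻¹ and y²xy⁻²x⁻¹), and let P = x + x⁻¹ + y + y⁻¹ ∈ ℂ[Γ]. Let Q = (x + x⁻¹ + z(y + y⁻¹)) · (x + x⁻¹ + z⁻¹(y + y⁻¹)) ∈ ℂ[ℤ³], where x, y, z are the standard generators of ℤ³. Then for every n ∈ ℕ, [P^{2n}]_0 computed in ℂ[Γ] equals [Q^n]_0 computed in ℂ[ℤ³]. -/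
/-!
In `Γ` the squares `x²` and `y²` are central, so every word of even length equals
`(x²)^i (xy)^k (y²)^j` for some `(i, j, k) ∈ ℤ³`: the even words form a commutative
subgroup, and `P²` is the image of an element `R ∈ ℂ[ℤ³]` under the induced map of group
algebras.
The abelianization `Γ → ℤ²` and the map sending `x`, `y` to reflections of the infinite
dihedral group recover `2i + k`, `2j + k` and `k`, so `ℤ³ → Γ` is injective and
`[P^{2n}]_0 = [R^n]_0`. The monomial map `(i, j, k) ↦ (2i + k, 2j + k, -k)` is injective too and
carries `R` to `Q`, whence `[R^n]_0 = [Q^n]_0`.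
-/

open Function

variable {k : Type*} [Semiring k]

lemma MonoidAlgebra.coeff_one_mapDomainRingHom_toMultiplicative {A M : Type*} [AddMonoid A]
    [Monoid M] {f : Multiplicative A →* M} (hf : Injective f) (x : AddMonoidAlgebra k A) :
    (mapDomainRingHom k f (AddMonoidAlgebra.toMultiplicative k A x)).coeff 1 = x.coeff 0 := by
  simpa [← Finsupp.mapDomain_comp] using
    Finsupp.mapDomain_apply (hf.comp Multiplicative.ofAdd.injective) x.coeff 0

lemma AddMonoidAlgebra.coeff_zero_mapDomainRingHom {A B : Type*} [AddMonoid A] [AddMonoid B]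
    {f : A →+ B} (hf : Injective f) (x : AddMonoidAlgebra k A) :
    (mapDomainRingHom k f x).coeff 0 = x.coeff 0 := by
  simpa using Finsupp.mapDomain_apply hf x.coeff 0

lemma MonoidAlgebra.sum_single_mul_sum_single {M ι κ : Type*} [Mul M] [Fintype ι] [Fintype κ]
    (f : ι → M) (g : κ → M) :
    (∑ i, single (f i) (1 : k)) * ∑ j, single (g j) 1 =
      ∑ p : ι × κ, single (f p.1 * g p.2) 1 := by
  simp [Finset.sum_mul_sum, Fintype.sum_prod_type]

lemma AddMonoidAlgebra.sum_single_mul_sum_single {M ι κ : Type*} [Add M] [Fintype ι] [Fintype κ]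
    (f : ι → M) (g : κ → M) :
    (∑ i, single (f i) (1 : k)) * ∑ j, single (g j) 1 =
      ∑ p : ι × κ, single (f p.1 + g p.2) 1 := by
  simp [Finset.sum_mul_sum, Fintype.sum_prod_type]

section EvenWords

variable {G : Type*} [Group G] {x y : G}

lemma commute_sq_mul_of_commute_sq (hx : Commute (x ^ 2) y) : Commute (x ^ 2) (x * y) :=
  (Commute.self_pow x 2).symm.mul_right hx

lemma commute_sq_mul_of_commute_sq' (hy : Commute (y ^ 2) x) : Commute (y ^ 2) (x * y) :=
  hy.mul_right (Commute.self_pow y 2).symm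

def evenWordHom (hx : Commute (x ^ 2) y) (hy : Commute (y ^ 2) x) :
    Multiplicative (ℤ × ℤ × ℤ) →* G where
  toFun v := (x ^ 2) ^ v.toAdd.1 * (x * y) ^ v.toAdd.2.2 * (y ^ 2) ^ v.toAdd.2.1
  map_one' := by simp
  map_mul' v w := by
    simp only [toAdd_mul, Prod.fst_add, Prod.snd_add, zpow_add, mul_assoc]
    rw [((hx.pow_right 2).zpow_zpow _ _).symm.left_comm,
      ((commute_sq_mul_of_commute_sq hx).zpow_zpow _ _).symm.left_comm,
      ((commute_sq_mul_of_commute_sq' hy).zpow_zpow _ _).left_comm]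

variable (hx : Commute (x ^ 2) y) (hy : Commute (y ^ 2) x)

lemma evenWordHom_apply (v : ℤ × ℤ × ℤ) :
    evenWordHom hx hy (.ofAdd v) = (x ^ 2) ^ v.1 * (x * y) ^ v.2.2 * (y ^ 2) ^ v.2.1 := rfl

lemma evenWordHom_apply' (v : ℤ × ℤ × ℤ) :
    evenWordHom hx hy (.ofAdd v) = (y ^ 2) ^ v.2.1 * (x * y) ^ v.2.2 * (x ^ 2) ^ v.1 := by
  rw [evenWordHom_apply, ((commute_sq_mul_of_commute_sq' hy).zpow_zpow _ _).eq, mul_assoc,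
    (((commute_sq_mul_of_commute_sq hx).zpow_zpow _ _).mul_right
      ((hx.pow_right 2).zpow_zpow _ _)).eq]

variable (x y) in
def letter : Fin 4 → G := ![x, x⁻¹, y, y⁻¹]

def pairExponent : Fin 4 → Fin 4 → ℤ × ℤ × ℤ :=
  ![![(1, 0, 0), (0, 0, 0), (0, 0, 1), (0, -1, 1)],
    ![(0, 0, 0), (-1, 0, 0), (-1, 0, 1), (-1, -1, 1)],
    ![(1, 1, -1), (0, 1, -1), (0, 1, 0), (0, 0, 0)],
    ![(1, 0, -1), (0, 0, -1), (0, 0, 0), (0, -1, 0)]]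

/- A product starting with `x^{±1}` equals the form of `evenWordHom_apply` already in the free
group, and one starting with `y^{±1}` the form of `evenWordHom_apply'`. -/
lemma letter_mul_letter (s t : Fin 4) :
    letter x y s * letter x y t = evenWordHom hx hy (.ofAdd (pairExponent s t)) := by
  fin_cases s <;>
    [rw [evenWordHom_apply]; rw [evenWordHom_apply];
      rw [evenWordHom_apply']; rw [evenWordHom_apply']] <;>
    fin_cases t <;> simp [letter, pairExponent, sq]

variable (k) in
noncomputable def evenSquare : AddMonoidAlgebra k (ℤ × ℤ × ℤ) :=
  ∑ p : Fin 4 × Fin 4, .single (pairExponent p.1 p.2) 1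

lemma sum_single_letter_sq :
    (∑ s, MonoidAlgebra.single (letter x y s) (1 : k)) ^ 2 =
      MonoidAlgebra.mapDomainRingHom k (evenWordHom hx hy)
        (AddMonoidAlgebra.toMultiplicative k _ (evenSquare k)) := by
  simp [sq, MonoidAlgebra.sum_single_mul_sum_single, letter_mul_letter hx hy, evenSquare]

end EvenWords

lemma PresentedGroup.commute_sq_of_mem {α : Type*} {rels : Set (FreeGroup α)} {u v : α}
    (h : FreeGroup.of u ^ 2 * FreeGroup.of v * (FreeGroup.of u)⁻¹ ^ 2 * (FreeGroup.of v)⁻¹ ∈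
      rels) :
    Commute ((of u : PresentedGroup rels) ^ 2) (of v) := by
  rw [← commutatorElement_eq_one_iff_commute, commutatorElement_def, ← inv_pow]
  have hr := one_of_mem h
  simp only [map_mul, map_pow, map_inv] at hr
  exact hr

abbrev diamondRels : Set (FreeGroup (Fin 2)) :=
  {FreeGroup.of 0 ^ 2 * FreeGroup.of 1 * (FreeGroup.of 0)⁻¹ ^ 2 * (FreeGroup.of 1)⁻¹,
   FreeGroup.of 1 ^ 2 * FreeGroup.of 0 * (FreeGroup.of 1)⁻¹ ^ 2 * (FreeGroup.of 0)⁻¹}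

lemma diamond_commute_sq_of_zero : Commute ((.of 0 : PresentedGroup diamondRels) ^ 2) (.of 1) :=
  PresentedGroup.commute_sq_of_mem (by simp)

lemma diamond_commute_sq_of_one : Commute ((.of 1 : PresentedGroup diamondRels) ^ 2) (.of 0) :=
  PresentedGroup.commute_sq_of_mem (by simp)

section DiamondLift

variable {H : Type*} [Group H] {u v : H} (hu : Commute (u ^ 2) v) (hv : Commute (v ^ 2) u)

def diamondLift : PresentedGroup diamondRels →* H :=
  PresentedGroup.toGroup (f := ![u, v]) <| by
    rintro r (rfl | rfl)
    · simpa [← inv_pow, commutatorElement_def] using hu.commutator_eq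
    · simpa [← inv_pow, commutatorElement_def] using hv.commutator_eq

lemma diamondLift_of_zero : diamondLift hu hv (.of 0) = u :=
  PresentedGroup.toGroup.of _

lemma diamondLift_of_one : diamondLift hu hv (.of 1) = v :=
  PresentedGroup.toGroup.of _

end DiamondLift

open DihedralGroup in
lemma evenWordHom_diamond_injective :
    Injective (evenWordHom diamond_commute_sq_of_zero diamond_commute_sq_of_one) := by
  rw [injective_iff_map_eq_one]
  intro w hw
  obtain ⟨⟨i, j, l⟩, rfl⟩ := Multiplicative.ofAdd.surjective w
  rw [evenWordHom_apply] at hw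
  have hl : l = 0 := by
    have h := congrArg (diamondLift (u := sr (0 : ZMod 0)) (v := sr 1) (by simp [sq])
      (by simp [sq])) hw
    simp only [map_mul, map_zpow, map_one, diamondLift_of_zero, diamondLift_of_one, sq,
      sr_mul_self, sr_mul_sr, one_zpow, mul_one, one_mul] at h
    rwa [sub_zero, r_one_zpow, one_def, r.injEq] at h
  have hij : 2 * i + l = 0 ∧ 2 * j + l = 0 := by
    have h := congrArg Multiplicative.toAdd <| congrArg (diamondLift
      (u := Multiplicative.ofAdd ((1, 0) : ℤ × ℤ)) (v := .ofAdd (0, 1)) (.all _ _) (.all _ _))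
      hw
    simp only [map_mul, map_zpow, map_pow, map_one, diamondLift_of_zero, diamondLift_of_one,
      toAdd_mul, toAdd_zpow, toAdd_pow, toAdd_ofAdd, toAdd_one, Prod.smul_mk, Int.nsmul_eq_mul,
      Int.zsmul_eq_mul, Nat.cast_ofNat, nsmul_zero, mul_one, mul_zero, Prod.mk_add_mk, add_zero,
      zero_add, Prod.mk_eq_zero] at h
    omega
  simp only [ofAdd_eq_one, Prod.mk_eq_zero]
  omega

def latticeMap : ℤ × ℤ × ℤ →+ (Fin 3 → ℤ) where
  toFun v := ![2 * v.1 + v.2.2, 2 * v.2.1 + v.2.2, -v.2.2]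
  map_zero' := by simp
  map_add' v w := by ext i; fin_cases i <;> simp <;> ring

lemma latticeMap_injective : Injective latticeMap := by
  rw [injective_iff_map_eq_zero]
  rintro ⟨i, j, l⟩ hv
  have h0 := congrFun hv 0
  have h1 := congrFun hv 1
  have h2 := congrFun hv 2
  simp only [latticeMap, AddMonoidHom.coe_mk, ZeroHom.coe_mk, Matrix.cons_val_zero,
    Matrix.cons_val_one, Matrix.cons_val, Pi.zero_apply, neg_eq_zero] at h0 h1 h2
  simp only [Prod.mk_eq_zero]
  omega

def stepUp : Fin 4 → Fin 3 → ℤ := ![![1, 0, 0], ![-1, 0, 0], ![0, 1, 1], ![0, -1, 1]]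

def stepDown : Fin 4 → Fin 3 → ℤ := ![![1, 0, 0], ![-1, 0, 0], ![0, 1, -1], ![0, -1, -1]]

lemma latticeMap_pairExponent (s t : Fin 4) :
    latticeMap (pairExponent s t) = stepUp s + stepDown t := by
  fin_cases s <;> fin_cases t <;> decide

lemma sum_single_stepUp_mul_sum_single_stepDown :
    (∑ s, AddMonoidAlgebra.single (stepUp s) (1 : k)) * ∑ t, .single (stepDown t) 1 =
      AddMonoidAlgebra.mapDomainRingHom k latticeMap (evenSquare k) := by
  simp [AddMonoidAlgebra.sum_single_mul_sum_single, latticeMap_pairExponent, evenSquare]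

/-- For `Γ = ⟨x, y | x²y = yx², y²x = xy²⟩` (the diamond-lattice group) and
`P = x + x⁻¹ + y + y⁻¹ ∈ ℂ[Γ]`, the constant coefficient `[P^{2n}]_0` equals the
constant coefficient `[Q^n]_0` in `ℂ[ℤ³]` of
`Q = (x + x⁻¹ + z(y+y⁻¹))(x + x⁻¹ + z⁻¹(y+y⁻¹))`. -/
theorem diamond_lattice_const_coeff
    (rels : Set (FreeGroup (Fin 2)))
    (hrels : rels = {FreeGroup.of 0 ^ 2 * FreeGroup.of 1 * (FreeGroup.of 0)⁻¹ ^ 2 *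
                       (FreeGroup.of 1)⁻¹,
                     FreeGroup.of 1 ^ 2 * FreeGroup.of 0 * (FreeGroup.of 1)⁻¹ ^ 2 *
                       (FreeGroup.of 0)⁻¹})
    (P : MonoidAlgebra ℂ (PresentedGroup rels))
    (hP : P = MonoidAlgebra.single (PresentedGroup.of 0) (1 : ℂ)
            + MonoidAlgebra.single (PresentedGroup.of 0)⁻¹ (1 : ℂ)
            + MonoidAlgebra.single (PresentedGroup.of 1) (1 : ℂ)
            + MonoidAlgebra.single (PresentedGroup.of 1)⁻¹ (1 : ℂ))
    (Q : AddMonoidAlgebra ℂ (Fin 3 → ℤ))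
    (hQ : Q = (AddMonoidAlgebra.single ![1, 0, 0] (1 : ℂ)
             + AddMonoidAlgebra.single ![-1, 0, 0] (1 : ℂ)
             + AddMonoidAlgebra.single ![0, 1, 1] (1 : ℂ)
             + AddMonoidAlgebra.single ![0, -1, 1] (1 : ℂ)) *
              (AddMonoidAlgebra.single ![1, 0, 0] (1 : ℂ)
             + AddMonoidAlgebra.single ![-1, 0, 0] (1 : ℂ)
             + AddMonoidAlgebra.single ![0, 1, -1] (1 : ℂ)
             + AddMonoidAlgebra.single ![0, -1, -1] (1 : ℂ)))
    (n : ℕ) :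
    (P ^ (2 * n)).coeff 1 = (Q ^ n).coeff 0 := by
  subst hrels
  have hP' : P = ∑ s, MonoidAlgebra.single (letter (.of 0) (.of 1) s) 1 := by
    rw [hP, Fin.sum_univ_four]; rfl
  have hQ' : Q = (∑ s, AddMonoidAlgebra.single (stepUp s) 1) * ∑ t, .single (stepDown t) 1 := by
    rw [hQ, Fin.sum_univ_four, Fin.sum_univ_four]; rfl
  calc (P ^ (2 * n)).coeff 1
      = (MonoidAlgebra.mapDomainRingHom ℂ
          (evenWordHom diamond_commute_sq_of_zero diamond_commute_sq_of_one)
          (AddMonoidAlgebra.toMultiplicative ℂ _ (evenSquare ℂ ^ n))).coeff 1 := by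
        rw [pow_mul, hP', sum_single_letter_sq, map_pow, map_pow]
    _ = (evenSquare ℂ ^ n).coeff 0 :=
        MonoidAlgebra.coeff_one_mapDomainRingHom_toMultiplicative evenWordHom_diamond_injective _
    _ = (AddMonoidAlgebra.mapDomainRingHom ℂ latticeMap (evenSquare ℂ ^ n)).coeff 0 :=
        (AddMonoidAlgebra.coeff_zero_mapDomainRingHom latticeMap_injective _).symm
    _ = (Q ^ n).coeff 0 := by
        rw [map_pow, ← sum_single_stepUp_mul_sum_single_stepDown, hQ']
end
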